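/- arXiv:2507.08650 — 9 statements merged into one kernel-verified Lean document; each statement's English description precedes it below -/
import Mathlib

section
/- If X is a Benford random variable (i.e., P(S(X) ≤ u) = log₁₀ u for u ∈ [1,10)), then for u ∈ [0,1), the distribution function of the fractional part of the significand is F(u) = Σ_{d=1}^{9} log₁₀((d+u)/d). -/
open MeasureTheory

/-- If `X` is a Benford random variable (CDF of the significand `S` is `log₁₀ u` on `[1,10)`),
then for `u ∈ [0,1)` the CDF of the fractional part of the significand is
`∑_{d=1}^9 log₁₀((d+u)/d)`. -/
theorem benford_fract_cdf {Ω : Type*} [MeasurableSpace Ω] (μ : Measure Ω)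
    [IsProbabilityMeasure μ] (S : Ω → ℝ) (hS : Measurable S)
    (hrange : ∀ ω, S ω ∈ Set.Ico (1 : ℝ) 10)
    (hB : ∀ u ∈ Set.Ico (1 : ℝ) 10, (μ {ω | S ω ≤ u}).toReal = Real.logb 10 u) :
    ∀ u ∈ Set.Ico (0 : ℝ) 1,
      (μ {ω | Int.fract (S ω) ≤ u}).toReal
        = ∑ d ∈ Finset.Icc (1 : ℕ) 9, Real.logb 10 (((d : ℝ) + u) / d) := by
  intro u hu
  obtain ⟨hu0, hu1⟩ := hu
  have hfin : ∀ s : Set Ω, μ s ≠ ⊤ := fun s => measure_ne_top μ s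
  -- atoms have measure zero
  have hatom : ∀ d : ℝ, d ∈ Set.Ico (1:ℝ) 10 → μ {ω | S ω = d} = 0 := by
    intro d ⟨hd1, hd10⟩
    rcases eq_or_lt_of_le hd1 with h1 | h1
    · have hsub : {ω | S ω = d} ⊆ {ω | S ω ≤ d} := fun ω h => le_of_eq h
      have h0 : (μ {ω | S ω ≤ d}).toReal = 0 := by
        rw [hB d ⟨hd1, hd10⟩, ← h1]; simp
      have : μ {ω | S ω ≤ d} = 0 := by
        rwa [ENNReal.toReal_eq_zero_iff, or_iff_left (hfin _)] at h0
      exact measure_mono_null hsub this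
    · -- d > 1
      have hkey : ∀ n : ℕ, (μ {ω | S ω = d}).toReal
          ≤ Real.logb 10 d - Real.logb 10 (d - (d-1)/(n+1)) := by
        intro n
        set ε : ℝ := (d-1)/(n+1) with hε
        have hεpos : 0 < ε := div_pos (by linarith) (by positivity)
        have hεle : ε ≤ d - 1 := by
          rw [hε, div_le_iff₀ (by positivity)]
          nlinarith [Nat.cast_nonneg (α := ℝ) n, sub_pos.mpr h1]
        have hmem : d - ε ∈ Set.Ico (1:ℝ) 10 := ⟨by linarith, by linarith⟩
        have hsub : {ω | S ω ≤ d - ε} ⊆ {ω | S ω ≤ d} := by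
          intro ω h
          simp only [Set.mem_setOf_eq] at h ⊢
          linarith
        have hdiff : μ ({ω | S ω ≤ d} \ {ω | S ω ≤ d - ε})
            = μ {ω | S ω ≤ d} - μ {ω | S ω ≤ d - ε} :=
          measure_diff hsub (hS measurableSet_Iic).nullMeasurableSet (hfin _)
        have hsub2 : {ω | S ω = d} ⊆ {ω | S ω ≤ d} \ {ω | S ω ≤ d - ε} := by
          intro ω hω
          simp only [Set.mem_setOf_eq, Set.mem_diff, not_le] at hω ⊢
          exact ⟨le_of_eq hω, by linarith⟩
        calc (μ {ω | S ω = d}).toReal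
            ≤ (μ ({ω | S ω ≤ d} \ {ω | S ω ≤ d - ε})).toReal :=
              ENNReal.toReal_mono (hfin _) (measure_mono hsub2)
          _ = Real.logb 10 d - Real.logb 10 (d - ε) := by
              rw [hdiff, ENNReal.toReal_sub_of_le (measure_mono hsub) (hfin _),
                hB d ⟨hd1, hd10⟩, hB _ hmem]
      have htend : Filter.Tendsto
          (fun n : ℕ => Real.logb 10 d - Real.logb 10 (d - (d-1)/(n+1)))
          Filter.atTop (nhds 0) := by
        have h1' : Filter.Tendsto (fun n : ℕ => d - (d-1)/(n+1)) Filter.atTop (nhds d) := by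
          have := tendsto_one_div_add_atTop_nhds_zero_nat.const_mul (d-1)
          have h2 : Filter.Tendsto (fun n : ℕ => (d-1)/(n+1)) Filter.atTop (nhds 0) := by
            simpa [div_eq_mul_inv, one_div, mul_comm] using this
          simpa using (tendsto_const_nhds (x := d)).sub h2
        have hlog : Filter.Tendsto (fun n : ℕ => Real.logb 10 (d - (d-1)/(n+1)))
            Filter.atTop (nhds (Real.logb 10 d)) := by
          have hc : ContinuousAt (Real.logb 10) d := by
            unfold Real.logb
            exact (Real.continuousAt_log (by linarith)).div_const _
          exact hc.tendsto.comp h1'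
        simpa using (tendsto_const_nhds (x := Real.logb 10 d)).sub hlog
      have hle : (μ {ω | S ω = d}).toReal ≤ 0 := ge_of_tendsto' htend hkey
      have h0 : (μ {ω | S ω = d}).toReal = 0 :=
        le_antisymm hle ENNReal.toReal_nonneg
      rwa [ENNReal.toReal_eq_zero_iff, or_iff_left (hfin _)] at h0
  -- left CDF
  have hlt : ∀ d : ℝ, d ∈ Set.Ico (1:ℝ) 10 → (μ {ω | S ω < d}).toReal = Real.logb 10 d := by
    intro d hd
    have heq : μ {ω | S ω < d} = μ {ω | S ω ≤ d} := by
      apply le_antisymm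
      · apply measure_mono
        intro ω (h : S ω < d)
        exact le_of_lt h
      · calc μ {ω | S ω ≤ d} ≤ μ ({ω | S ω < d} ∪ {ω | S ω = d}) := by
              apply measure_mono
              intro ω (h : S ω ≤ d)
              show S ω < d ∨ S ω = d
              exact lt_or_eq_of_le h
          _ ≤ μ {ω | S ω < d} + μ {ω | S ω = d} := measure_union_le _ _
          _ = μ {ω | S ω < d} := by rw [hatom d hd, add_zero]
    rw [heq, hB d hd]
  -- interval measure
  have hIcc : ∀ d : ℕ, d ∈ Finset.Icc 1 9 →
      (μ {ω | (d:ℝ) ≤ S ω ∧ S ω ≤ d + u}).toReal = Real.logb 10 (((d:ℝ) + u) / d) := by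
    intro d hd
    rw [Finset.mem_Icc] at hd
    have hd1 : (1:ℝ) ≤ d := by exact_mod_cast hd.1
    have hd9 : (d:ℝ) ≤ 9 := by exact_mod_cast hd.2
    have hmem1 : ((d:ℝ) + u) ∈ Set.Ico (1:ℝ) 10 := ⟨by linarith, by linarith⟩
    have hmem2 : (d:ℝ) ∈ Set.Ico (1:ℝ) 10 := ⟨hd1, by linarith⟩
    have hset : {ω | (d:ℝ) ≤ S ω ∧ S ω ≤ d + u}
        = {ω | S ω ≤ (d:ℝ) + u} \ {ω | S ω < (d:ℝ)} := by
      ext ω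
      simp only [Set.mem_setOf_eq, Set.mem_diff, not_lt]
      tauto
    have hsub : {ω | S ω < (d:ℝ)} ⊆ {ω | S ω ≤ (d:ℝ) + u} := by
      intro ω h
      simp only [Set.mem_setOf_eq] at h ⊢
      linarith
    rw [hset, measure_diff hsub (hS measurableSet_Iio).nullMeasurableSet (hfin _),
      ENNReal.toReal_sub_of_le (measure_mono hsub) (hfin _),
      hB _ hmem1, hlt _ hmem2, Real.logb_div (by positivity) (by positivity)]
  -- decompose the event
  have hunion : {ω | Int.fract (S ω) ≤ u}
      = ⋃ d ∈ Finset.Icc (1:ℕ) 9, {ω | (d:ℝ) ≤ S ω ∧ S ω ≤ d + u} := by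
    ext ω
    simp only [Set.mem_setOf_eq, Set.mem_iUnion, Finset.mem_Icc, exists_prop]
    constructor
    · intro h
      obtain ⟨h1, h10⟩ := hrange ω
      have hfl1 : (1:ℤ) ≤ ⌊S ω⌋ := Int.le_floor.mpr (by push_cast; linarith)
      have hfl9 : ⌊S ω⌋ ≤ 9 := by
        have hle : (⌊S ω⌋ : ℝ) < 10 := lt_of_le_of_lt (Int.floor_le _) h10
        have : ⌊S ω⌋ < 10 := by exact_mod_cast hle
        omega
      refine ⟨⌊S ω⌋.toNat, ⟨by omega, by omega⟩, ?_, ?_⟩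
      · have hc : ((⌊S ω⌋.toNat : ℕ) : ℝ) = ((⌊S ω⌋ : ℤ) : ℝ) := by
          norm_cast; omega
        rw [hc]; exact Int.floor_le _
      · have hc : ((⌊S ω⌋.toNat : ℕ) : ℝ) = ((⌊S ω⌋ : ℤ) : ℝ) := by
          norm_cast; omega
        rw [hc]
        have := h
        unfold Int.fract at this
        linarith
    · rintro ⟨d, ⟨hd1, hd9⟩, hle, hge⟩
      have hfl : ⌊S ω⌋ = (d : ℤ) := by
        apply Int.floor_eq_iff.mpr
        constructor
        · exact_mod_cast hle
        · push_cast; linarith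
      rw [Int.fract, hfl]
      push_cast; linarith
  have hdisj : (↑(Finset.Icc (1:ℕ) 9) : Set ℕ).PairwiseDisjoint
      (fun d : ℕ => {ω | (d:ℝ) ≤ S ω ∧ S ω ≤ d + u}) := by
    intro d hd e he hne
    refine Set.disjoint_left.mpr ?_
    rintro ω ⟨hd1, hd2⟩ ⟨he1, he2⟩
    have h1 : (d:ℝ) < (e:ℝ) + 1 := by linarith
    have h2 : (e:ℝ) < (d:ℝ) + 1 := by linarith
    have h1' : d < e + 1 := by exact_mod_cast h1
    have h2' : e < d + 1 := by exact_mod_cast h2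
    omega
  have hmeas : ∀ d ∈ Finset.Icc (1:ℕ) 9,
      MeasurableSet {ω | (d:ℝ) ≤ S ω ∧ S ω ≤ d + u} := by
    intro d _
    exact (hS measurableSet_Ici).inter (hS measurableSet_Iic)
  rw [hunion, measure_biUnion_finset hdisj hmeas,
    ENNReal.toReal_sum (fun d _ => hfin _)]
  exact Finset.sum_congr rfl hIcc
end

section
/- If X is a Benford random variable, then for v ∈ [1,10) and u ∈ [0,1), the joint distribution function of the first digit D(X) = ⌊S(X)⌋ and the fractional part ⟨S(X)⟩ satisfies P(D(X) ≤ v, ⟨S(X)⟩ ≤ u) = Σ_{j=1}^{⌊v⌋} log₁₀((j+u)/j). -/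
open MeasureTheory

/-- Joint CDF of the first digit `D(X) = ⌊S(X)⌋` and the fractional part `⟨S(X)⟩`
for a Benford random variable: for `v ∈ [1,10)` and `u ∈ [0,1)`,
`P(D(X) ≤ v, ⟨S(X)⟩ ≤ u) = ∑_{j=1}^{⌊v⌋} log₁₀((j+u)/j)`. -/
theorem benford_joint_cdf {Ω : Type*} [MeasurableSpace Ω] (μ : Measure Ω)
    [IsProbabilityMeasure μ] (S : Ω → ℝ) (hS : Measurable S)
    (hrange : ∀ ω, S ω ∈ Set.Ico (1 : ℝ) 10)
    (hB : ∀ u ∈ Set.Ico (1 : ℝ) 10, (μ {ω | S ω ≤ u}).toReal = Real.logb 10 u) :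
    ∀ v ∈ Set.Ico (1 : ℝ) 10, ∀ u ∈ Set.Ico (0 : ℝ) 1,
      (μ {ω | ((⌊S ω⌋ : ℝ) ≤ v ∧ Int.fract (S ω) ≤ u)}).toReal
        = ∑ j ∈ Finset.Icc (1 : ℕ) ⌊v⌋₊, Real.logb 10 (((j : ℝ) + u) / j) := by
  intro v hv u hu
  obtain ⟨hv1, hv10⟩ := hv
  obtain ⟨hu0, hu1⟩ := hu
  set n := ⌊v⌋₊ with hn
  have hn1 : 1 ≤ n := Nat.le_floor (by exact_mod_cast hv1)
  have hn9 : n ≤ 9 := by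
    have h10 : n < 10 := (Nat.floor_lt (by linarith)).mpr (by exact_mod_cast hv10)
    omega
  have hnv : (n : ℝ) ≤ v := Nat.floor_le (by linarith)
  -- left limit of the CDF
  have hleft : ∀ j : ℕ, 1 ≤ j → j ≤ 9 → (μ {ω | S ω < (j:ℝ)}).toReal = Real.logb 10 j := by
    intro j hj1 hj9
    rcases eq_or_lt_of_le hj1 with h | h
    · have he : {ω | S ω < (j:ℝ)} = ∅ := by
        ext ω
        simp only [Set.mem_setOf_eq, Set.mem_empty_iff_false, iff_false, not_lt, ← h]
        exact_mod_cast (hrange ω).1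
      rw [he, ← h]
      simp
    · apply le_antisymm
      · have h1 : (μ {ω | S ω < (j:ℝ)}).toReal ≤ (μ {ω | S ω ≤ (j:ℝ)}).toReal :=
          ENNReal.toReal_mono (measure_ne_top μ _)
            (measure_mono fun ω hω => Set.mem_setOf_eq ▸ le_of_lt hω)
        rw [hB j ⟨by exact_mod_cast hj1, by exact_mod_cast (by omega : j < 10)⟩] at h1
        exact h1
      · apply le_of_forall_lt
        intro c hc
        set c' := (c + Real.logb 10 j)/2 with hc'
        have hcc' : c < c' := by simp [hc']; linarith
        have hc'j : c' < Real.logb 10 j := by simp [hc']; linarith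
        rcases le_or_gt c' 0 with h0 | h0
        · exact lt_of_lt_of_le (lt_of_lt_of_le hcc' h0) ENNReal.toReal_nonneg
        · set t := (10:ℝ) ^ c' with ht
          have hlt : Real.logb 10 t = c' := Real.logb_rpow (by norm_num) (by norm_num)
          have ht1 : 1 < t :=
            Real.one_lt_rpow_iff_of_pos (by norm_num) |>.mpr (Or.inl ⟨by norm_num, h0⟩)
          have htj : t < j := by
            have : (10:ℝ) ^ c' < (10:ℝ) ^ Real.logb 10 (j:ℝ) :=
              Real.rpow_lt_rpow_of_exponent_lt (by norm_num) hc'j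
            rwa [Real.rpow_logb (by norm_num) (by norm_num) (by positivity)] at this
          have hsub : (μ {ω | S ω ≤ t}).toReal ≤ (μ {ω | S ω < (j:ℝ)}).toReal :=
            ENNReal.toReal_mono (measure_ne_top μ _)
              (measure_mono fun ω hω => Set.mem_setOf_eq ▸ lt_of_le_of_lt hω htj)
          rw [hB t ⟨le_of_lt ht1, by
            calc t < (j:ℝ) := htj
            _ ≤ 9 := by exact_mod_cast hj9
            _ < 10 := by norm_num⟩, hlt] at hsub
          exact lt_of_lt_of_le hcc' hsub
  -- measure of each slab
  have hA : ∀ j : ℕ, 1 ≤ j → j ≤ 9 →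
      (μ {ω | (j:ℝ) ≤ S ω ∧ S ω ≤ (j:ℝ) + u}).toReal = Real.logb 10 (((j:ℝ) + u) / j) := by
    intro j hj1 hj9
    have hj1R : (1:ℝ) ≤ j := by exact_mod_cast hj1
    have hj9R : (j:ℝ) ≤ 9 := by exact_mod_cast hj9
    have hset : {ω | (j:ℝ) ≤ S ω ∧ S ω ≤ (j:ℝ) + u}
        = {ω | S ω ≤ (j:ℝ) + u} \ {ω | S ω < (j:ℝ)} := by
      ext ω
      simp only [Set.mem_setOf_eq, Set.mem_diff, not_lt]
      tauto
    have hCB : {ω | S ω < (j:ℝ)} ⊆ {ω | S ω ≤ (j:ℝ) + u} :=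
      fun ω hω => Set.mem_setOf_eq ▸ le_of_lt (lt_of_lt_of_le hω (by linarith))
    have hCm : MeasurableSet {ω | S ω < (j:ℝ)} := measurableSet_lt hS measurable_const
    rw [hset, measure_diff hCB hCm.nullMeasurableSet (measure_ne_top μ _),
      ENNReal.toReal_sub_of_le (measure_mono hCB) (measure_ne_top μ _),
      hB ((j:ℝ) + u) ⟨by linarith, by linarith⟩, hleft j hj1 hj9,
      Real.logb_div (by linarith) (by linarith)]
  -- decompose the event
  have hE : {ω | ((⌊S ω⌋ : ℝ) ≤ v ∧ Int.fract (S ω) ≤ u)}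
      = ⋃ j ∈ Finset.Icc (1:ℕ) n, {ω | (j:ℝ) ≤ S ω ∧ S ω ≤ (j:ℝ) + u} := by
    ext ω
    simp only [Set.mem_setOf_eq, Set.mem_iUnion, Finset.mem_Icc, exists_prop]
    constructor
    · rintro ⟨h1, h2⟩
      have hk1 : (1:ℤ) ≤ ⌊S ω⌋ := Int.le_floor.mpr (by exact_mod_cast (hrange ω).1)
      have hkv : ⌊S ω⌋ ≤ ⌊v⌋ := Int.le_floor.mpr h1
      have hcast : ((⌊S ω⌋.toNat : ℕ) : ℝ) = ((⌊S ω⌋ : ℤ) : ℝ) := by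
        exact_mod_cast congrArg (Int.cast : ℤ → ℝ)
          (Int.toNat_of_nonneg (by omega : (0:ℤ) ≤ ⌊S ω⌋))
      refine ⟨⌊S ω⌋.toNat, ⟨by omega, ?_⟩, ?_, ?_⟩
      · have : ⌊S ω⌋.toNat ≤ ⌊v⌋.toNat := Int.toNat_le_toNat hkv
        rwa [Int.floor_toNat] at this
      · rw [hcast]
        exact Int.floor_le _
      · rw [Int.fract] at h2
        rw [hcast]
        linarith
    · rintro ⟨j, ⟨hj1, hjn⟩, hjS, hSj⟩
      have hfl : ⌊S ω⌋ = (j:ℤ) := by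
        have hlow : (j:ℤ) ≤ ⌊S ω⌋ := Int.le_floor.mpr (by exact_mod_cast hjS)
        have hup : ⌊S ω⌋ < (j:ℤ) + 1 := Int.floor_lt.mpr (by push_cast; linarith)
        omega
      constructor
      · rw [hfl]
        push_cast
        calc (j:ℝ) ≤ n := by exact_mod_cast hjn
        _ ≤ v := hnv
      · rw [Int.fract, hfl]
        push_cast
        linarith
  -- disjointness
  have hdisj : (↑(Finset.Icc (1:ℕ) n) : Set ℕ).PairwiseDisjoint
      (fun j : ℕ => {ω | (j:ℝ) ≤ S ω ∧ S ω ≤ (j:ℝ) + u}) := by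
    intro i _ j _ hij
    apply Set.disjoint_left.mpr
    rintro ω ⟨hi1, hi2⟩ ⟨hj1, hj2⟩
    rcases lt_or_gt_of_ne hij with h | h
    · have : (i:ℝ) + 1 ≤ j := by exact_mod_cast h
      linarith
    · have : (j:ℝ) + 1 ≤ i := by exact_mod_cast h
      linarith
  have hmeas : ∀ j ∈ Finset.Icc (1:ℕ) n,
      MeasurableSet {ω | (j:ℝ) ≤ S ω ∧ S ω ≤ (j:ℝ) + u} := by
    intro j _
    exact (measurableSet_le measurable_const hS).inter (measurableSet_le hS measurable_const)
  rw [hE, measure_biUnion_finset hdisj hmeas,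
    ENNReal.toReal_sum (fun j _ => measure_ne_top μ _)]
  refine Finset.sum_congr rfl fun j hj => ?_
  obtain ⟨hj1, hjn⟩ := Finset.mem_Icc.mp hj
  exact hA j hj1 (le_trans hjn hn9)
end

section
/- If X is a Benford random variable, then for nonnegative integers r and positive integers s, E[D(X)^r ⟨S(X)⟩^s] = (-1)^s E[D(X)^{r+s}] + C Σ_{d=1}^{9} d^{r+s} Σ_{j=1}^{s} C(s,j) (-1)^{s-j} ((1+1/d)^j − 1)/j, where C = log₁₀ e and C(s,j) is the binomial coefficient. -/
open MeasureTheory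
open scoped NNReal ENNReal

lemma benford_C_nonneg : (0:ℝ) ≤ Real.logb 10 (Real.exp 1) :=
  Real.logb_nonneg (by norm_num) (Real.one_le_exp (by norm_num))

lemma benford_union : Set.Ico (1:ℝ) 10 = ⋃ d ∈ Finset.Icc (1:ℕ) 9, Set.Ico (d:ℝ) (d+1) := by
  ext u
  simp only [Set.mem_iUnion, Set.mem_Ico, Finset.mem_Icc, exists_prop]
  constructor
  · rintro ⟨h1, h2⟩
    have hf1 : (1:ℤ) ≤ ⌊u⌋ := Int.le_floor.2 (by exact_mod_cast h1)
    have hf2 : ⌊u⌋ < 10 := Int.floor_lt.2 (by exact_mod_cast h2)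
    have hc : ((⌊u⌋.toNat : ℕ) : ℝ) = (⌊u⌋ : ℝ) := by
      exact_mod_cast congrArg (fun z : ℤ => (z : ℝ)) (Int.toNat_of_nonneg (by omega))
    exact ⟨⌊u⌋.toNat, ⟨by omega, by omega⟩, hc ▸ Int.floor_le u, hc ▸ Int.lt_floor_add_one u⟩
  · rintro ⟨d, ⟨hd1, hd9⟩, hu1, hu2⟩
    have h1 : (1:ℝ) ≤ (d:ℝ) := by exact_mod_cast hd1
    have h9 : (d:ℝ) + 1 ≤ 10 := by exact_mod_cast Nat.succ_le_succ hd9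
    exact ⟨h1.trans hu1, lt_of_lt_of_le hu2 h9⟩

lemma benford_floor_eq {d : ℕ} {u : ℝ} (hu : u ∈ Set.Ico (d:ℝ) (d+1)) : (⌊u⌋:ℝ) = d := by
  have : ⌊u⌋ = (d:ℤ) := Int.floor_eq_iff.2 ⟨by exact_mod_cast hu.1, by exact_mod_cast hu.2⟩
  exact_mod_cast congrArg (fun z : ℤ => (z:ℝ)) this

lemma benford_eqOn (c : ℝ) (a b : ℕ) (hb : 1 ≤ b) {d : ℕ} (hd : 1 ≤ d) :
    Set.EqOn (fun u => (c / u) * ((⌊u⌋:ℝ)^a * u^b))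
      (fun u => c * (d:ℝ)^a * u^(b-1)) (Set.Ico (d:ℝ) (d+1)) := by
  intro u hu
  have hd1 : (1:ℝ) ≤ (d:ℝ) := by exact_mod_cast hd
  have hu0 : (0:ℝ) < u := lt_of_lt_of_le one_pos (hd1.trans hu.1)
  have hub : u ^ b = u * u^(b-1) := by
    conv_lhs => rw [show b = 1 + (b-1) by omega]
    rw [pow_add, pow_one]
  simp only [benford_floor_eq hu, hub]
  field_simp

lemma benford_piece (c : ℝ) (a b : ℕ) (hb : 1 ≤ b) (d : ℕ) (hd : 1 ≤ d) :
    ∫ u in Set.Ico (d:ℝ) (d+1), (c / u) * ((⌊u⌋:ℝ)^a * u^b)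
      = c * ((d:ℝ)^a * (((d:ℝ)+1)^b - (d:ℝ)^b) / b) := by
  have hd1 : (1:ℝ) ≤ (d:ℝ) := by exact_mod_cast hd
  rw [setIntegral_congr_fun measurableSet_Ico (benford_eqOn c a b hb hd), integral_const_mul]
  have hIoc : ∫ u in Set.Ico (d:ℝ) (d+1), u^(b-1)
      = ∫ u in Set.Ioc (d:ℝ) (d+1), u^(b-1) := setIntegral_congr_set Ico_ae_eq_Ioc
  have hival : ∫ u in Set.Ioc (d:ℝ) (d+1), u^(b-1)
      = (((d:ℝ)+1)^b - (d:ℝ)^b)/b := by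
    rw [← intervalIntegral.integral_of_le (by linarith : (d:ℝ) ≤ (d:ℝ)+1)]
    rw [integral_pow]
    rw [show b - 1 + 1 = b by omega, show ((b-1:ℕ):ℝ) + 1 = (b:ℝ) by
      push_cast [Nat.cast_sub hb]; ring]
  rw [hIoc, hival]
  ring

lemma benford_intOn (c : ℝ) (a b : ℕ) (hb : 1 ≤ b) {d : ℕ} (hd : 1 ≤ d) :
    IntegrableOn (fun u => (c / u) * ((⌊u⌋:ℝ)^a * u^b)) (Set.Ico (d:ℝ) (d+1)) volume := by
  have : IntegrableOn (fun u : ℝ => c * (d:ℝ)^a * u^(b-1)) (Set.Ico (d:ℝ) (d+1)) volume :=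
    ((continuous_const.mul (continuous_pow (b-1))).integrableOn_Icc).mono_set
      Set.Ico_subset_Icc_self
  exact this.congr_fun (benford_eqOn c a b hb hd).symm measurableSet_Ico

lemma benford_sum (c : ℝ) (a b : ℕ) (hb : 1 ≤ b) :
    ∫ u in Set.Ico (1:ℝ) 10, (c / u) * ((⌊u⌋:ℝ)^a * u^b)
      = c * ∑ d ∈ Finset.Icc (1:ℕ) 9, (d:ℝ)^a * (((d:ℝ)+1)^b - (d:ℝ)^b) / b := by
  rw [benford_union]
  rw [integral_biUnion_finset _ (fun i _ => measurableSet_Ico) ?_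
    (fun i hi => benford_intOn c a b hb (Finset.mem_Icc.1 hi).1)]
  · rw [Finset.mul_sum]
    exact Finset.sum_congr rfl fun d hd =>
      benford_piece c a b hb d (Finset.mem_Icc.1 hd).1
  · intro i hi j hj hij
    simp only [Function.onFun]
    rw [Set.Ico_disjoint_Ico]
    rcases Ne.lt_or_gt hij with h|h
    · have hij' : (i:ℝ)+1 ≤ (j:ℝ) := by exact_mod_cast h
      exact le_trans (min_le_left _ _) (hij'.trans (le_max_right _ _))
    · have hij' : (j:ℝ)+1 ≤ (i:ℝ) := by exact_mod_cast h
      exact le_trans (min_le_right _ _) (hij'.trans (le_max_left _ _))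

lemma benford_term_eq (c : ℝ) (r s : ℕ) {d j : ℕ} (hd : 1 ≤ d) (hj1 : 1 ≤ j) (hjs : j ≤ s) :
    (-1:ℝ)^(j+s) * (s.choose j : ℝ) * ((d:ℝ)^(r+s-j) * (((d:ℝ)+1)^j - (d:ℝ)^j) / j)
      = (d:ℝ)^(r+s) * ((s.choose j : ℝ) * (-1:ℝ)^(s-j) * ((1 + 1/(d:ℝ))^j - 1) / j) := by
  have hd0 : (d:ℝ) ≠ 0 := by positivity
  have hsign : (-1:ℝ)^(j+s) = (-1:ℝ)^(s-j) := by
    rw [show j + s = (s-j) + 2*j by omega, pow_add, pow_mul]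
    simp
  have hpow : (d:ℝ)^(r+s) = (d:ℝ)^(r+s-j) * (d:ℝ)^j := by
    rw [← pow_add]; congr 1; omega
  have key : ((1 + 1/(d:ℝ))^j - 1) * (d:ℝ)^j = ((d:ℝ)+1)^j - (d:ℝ)^j := by
    rw [sub_mul, one_mul, ← mul_pow]
    congr 2
    field_simp
  rw [hsign, hpow, ← key]
  ring

/-- Mixed moments of the first digit and the fractional part of the significand of a
Benford random variable: for `r ≥ 0` and `s ≥ 1`,
`E[D(X)^r ⟨S(X)⟩^s] = (-1)^s E[D(X)^{r+s}]
  + C ∑_{d=1}^9 d^{r+s} ∑_{j=1}^s C(s,j) (-1)^{s-j} ((1+1/d)^j − 1)/j`. -/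
theorem benford_mixed_moments {Ω : Type*} [MeasurableSpace Ω] (μ : Measure Ω)
    [IsProbabilityMeasure μ] (S : Ω → ℝ) (hS : Measurable S)
    (hlaw : Measure.map S μ
      = (volume.restrict (Set.Ico (1 : ℝ) 10)).withDensity
          (fun u => ENNReal.ofReal (Real.logb 10 (Real.exp 1) / u)))
    (r s : ℕ) (hs : 1 ≤ s) :
    ∫ ω, ((⌊S ω⌋ : ℝ)) ^ r * (Int.fract (S ω)) ^ s ∂μ
      = (-1 : ℝ) ^ s * ∫ ω, ((⌊S ω⌋ : ℝ)) ^ (r + s) ∂μ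
        + Real.logb 10 (Real.exp 1)
          * ∑ d ∈ Finset.Icc (1 : ℕ) 9, (d : ℝ) ^ (r + s)
            * ∑ j ∈ Finset.Icc (1 : ℕ) s,
                (Nat.choose s j : ℝ) * (-1 : ℝ) ^ (s - j)
                  * ((1 + 1 / (d : ℝ)) ^ j - 1) / j := by
  set c := Real.logb 10 (Real.exp 1) with hc
  have hC0 : (0:ℝ) ≤ c := benford_C_nonneg
  -- a.e. membership in Ico 1 10
  have hzero : μ (S ⁻¹' (Set.Ico (1:ℝ) 10)ᶜ) = 0 := by
    rw [← Measure.map_apply hS measurableSet_Ico.compl, hlaw,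
      withDensity_apply _ measurableSet_Ico.compl,
      Measure.restrict_restrict measurableSet_Ico.compl]
    simp
  have hmem : ∀ᵐ ω ∂μ, S ω ∈ Set.Ico (1:ℝ) 10 := by
    rw [ae_iff]; exact hzero
  -- measurability and integrability of the building blocks
  have hgm : ∀ a b : ℕ, Measurable fun u : ℝ => (⌊u⌋:ℝ)^a * u^b := fun a b =>
    ((measurable_from_top.comp Int.measurable_floor).pow_const a).mul (measurable_id.pow_const b)
  have hint : ∀ a b : ℕ, Integrable (fun ω => (⌊S ω⌋:ℝ)^a * (S ω)^b) μ := by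
    intro a b
    refine Integrable.mono' (integrable_const ((10:ℝ)^a * 10^b))
      (((hgm a b).comp hS).aestronglyMeasurable) ?_
    filter_upwards [hmem] with ω hω
    have h1 : (1:ℝ) ≤ S ω := hω.1
    have h2 : S ω < 10 := hω.2
    have hf0 : (0:ℝ) ≤ (⌊S ω⌋:ℝ) := by
      have : (0:ℤ) ≤ ⌊S ω⌋ := Int.le_floor.2 (by push_cast; linarith)
      exact_mod_cast this
    have hf10 : (⌊S ω⌋:ℝ) ≤ 10 := le_trans (Int.floor_le _) (by linarith)
    rw [Real.norm_eq_abs, abs_mul, abs_pow, abs_pow, abs_of_nonneg hf0,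
      abs_of_nonneg (by linarith : (0:ℝ) ≤ S ω)]
    gcongr <;> linarith
  -- pushforward computation
  have hpush : ∀ a b : ℕ, ∫ ω, (⌊S ω⌋:ℝ)^a * (S ω)^b ∂μ
      = ∫ u in Set.Ico (1:ℝ) 10, (c / u) * ((⌊u⌋:ℝ)^a * u^b) := by
    intro a b
    rw [← integral_map hS.aemeasurable (hgm a b).aestronglyMeasurable, hlaw]
    have hden : (fun u : ℝ => ENNReal.ofReal (c / u))
        = fun u => ((Real.toNNReal (c/u) : ℝ≥0) : ℝ≥0∞) := rfl
    have hmeas : Measurable fun u : ℝ => (c/u).toNNReal := by fun_prop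
    rw [hden, integral_withDensity_eq_integral_smul hmeas]
    refine setIntegral_congr_fun measurableSet_Ico fun u hu => ?_
    have hu0 : (0:ℝ) < u := lt_of_lt_of_le one_pos hu.1
    have h0 : 0 ≤ c / u := div_nonneg hC0 hu0.le
    simp [NNReal.smul_def, Real.coe_toNNReal _ h0]
  -- binomial expansion of the fractional part
  have hexp : (fun ω => (⌊S ω⌋:ℝ)^r * (Int.fract (S ω))^s)
      = fun ω => ∑ j ∈ Finset.range (s+1),
          ((-1:ℝ)^(j+s) * (s.choose j : ℝ)) * ((⌊S ω⌋:ℝ)^(r+s-j) * (S ω)^j) := by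
    funext ω
    rw [← Int.self_sub_floor, sub_pow, Finset.mul_sum]
    refine Finset.sum_congr rfl fun j hj => ?_
    rw [Finset.mem_range] at hj
    have hp : (⌊S ω⌋:ℝ)^r * (⌊S ω⌋:ℝ)^(s-j) = (⌊S ω⌋:ℝ)^(r+s-j) := by
      rw [← pow_add]; congr 1; omega
    calc (⌊S ω⌋:ℝ) ^ r * ((-1:ℝ)^(j+s) * (S ω)^j * (⌊S ω⌋:ℝ)^(s-j) * (s.choose j : ℝ))
        = ((-1:ℝ)^(j+s) * (s.choose j:ℝ)) * (((⌊S ω⌋:ℝ)^r * (⌊S ω⌋:ℝ)^(s-j)) * (S ω)^j) := by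
          ring
      _ = _ := by rw [hp]
  rw [hexp, integral_finset_sum _ (fun j _ => (hint (r+s-j) j).const_mul _)]
  simp_rw [integral_const_mul]
  rw [Finset.sum_range_succ']
  have hzeroterm : (-1:ℝ)^(0+s) * (s.choose 0 : ℝ) * ∫ ω, (⌊S ω⌋:ℝ)^(r+s-0) * (S ω)^0 ∂μ
      = (-1:ℝ)^s * ∫ ω, (⌊S ω⌋:ℝ)^(r+s) ∂μ := by
    simp
  rw [hzeroterm]
  -- now compute the remaining sum
  have hsum : ∑ i ∈ Finset.range s,
        (-1:ℝ)^(i+1+s) * (s.choose (i+1) : ℝ) * ∫ ω, (⌊S ω⌋:ℝ)^(r+s-(i+1)) * (S ω)^(i+1) ∂μ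
      = c * ∑ d ∈ Finset.Icc (1:ℕ) 9, (d:ℝ)^(r+s)
          * ∑ j ∈ Finset.Icc (1:ℕ) s,
              (s.choose j : ℝ) * (-1:ℝ)^(s-j) * ((1 + 1/(d:ℝ))^j - 1) / j := by
    have hIcc : ∑ j ∈ Finset.Icc (1:ℕ) s,
          (-1:ℝ)^(j+s) * (s.choose j : ℝ) * ∫ ω, (⌊S ω⌋:ℝ)^(r+s-j) * (S ω)^j ∂μ
        = ∑ i ∈ Finset.range s,
          (-1:ℝ)^(i+1+s) * (s.choose (i+1) : ℝ) * ∫ ω, (⌊S ω⌋:ℝ)^(r+s-(i+1)) * (S ω)^(i+1) ∂μ := by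
      rw [← Finset.Ico_add_one_right_eq_Icc, Finset.sum_Ico_eq_sum_range]
      refine Finset.sum_congr (by congr 1) fun i _ => by rw [add_comm 1 i]
    rw [← hIcc]
    have hterm : ∀ j ∈ Finset.Icc (1:ℕ) s,
        (-1:ℝ)^(j+s) * (s.choose j : ℝ) * ∫ ω, (⌊S ω⌋:ℝ)^(r+s-j) * (S ω)^j ∂μ
        = ∑ d ∈ Finset.Icc (1:ℕ) 9,
            c * ((-1:ℝ)^(j+s) * (s.choose j : ℝ)
              * ((d:ℝ)^(r+s-j) * (((d:ℝ)+1)^j - (d:ℝ)^j) / j)) := by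
      intro j hj
      rw [Finset.mem_Icc] at hj
      rw [hpush (r+s-j) j, benford_sum c (r+s-j) j hj.1, Finset.mul_sum, Finset.mul_sum]
      exact Finset.sum_congr rfl fun d _ => by ring
    rw [Finset.sum_congr rfl hterm, Finset.sum_comm, Finset.mul_sum]
    refine Finset.sum_congr rfl fun d hd => ?_
    rw [Finset.mul_sum, Finset.mul_sum]
    refine Finset.sum_congr rfl fun j hj => ?_
    rw [Finset.mem_Icc] at hd hj
    rw [benford_term_eq c r s hd.1 hj.1 hj.2]
  rw [hsum]
  ring
end

section
/- If X is a Benford random variable, then for each d ∈ {1,...,9}, the conditional expectation E[⟨S(X)⟩ | D(X) = d] = C/p_d − d, where C = log₁₀ e and p_d = log₁₀((d+1)/d). -/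
open MeasureTheory
open scoped NNReal ENNReal

/-- For a Benford random variable, the conditional expectation of the fractional part
of the significand given the first digit `d` is `C/p_d − d`, where `C = log₁₀ e` and
`p_d = log₁₀((d+1)/d)`. -/
theorem benford_cond_expectation {Ω : Type*} [MeasurableSpace Ω] (μ : Measure Ω)
    [IsProbabilityMeasure μ] (S : Ω → ℝ) (hS : Measurable S)
    (hlaw : Measure.map S μ
      = (volume.restrict (Set.Ico (1 : ℝ) 10)).withDensity
          (fun u => ENNReal.ofReal (Real.logb 10 (Real.exp 1) / u))) :
    ∀ d ∈ Finset.Icc (1 : ℕ) 9,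
      (∫ ω in {ω | ⌊S ω⌋ = (d : ℤ)}, Int.fract (S ω) ∂μ)
          / (μ {ω | ⌊S ω⌋ = (d : ℤ)}).toReal
        = Real.logb 10 (Real.exp 1) / Real.logb 10 (((d : ℝ) + 1) / d) - d := by
  intro d hd
  simp only [Finset.mem_Icc] at hd
  set C : ℝ := Real.logb 10 (Real.exp 1) with hCdef
  have hC : C = 1 / Real.log 10 := by
    rw [hCdef, Real.logb, Real.log_exp]
  have hlog10 : 0 < Real.log 10 := Real.log_pos (by norm_num)
  have hCpos : 0 < C := by rw [hC]; positivity
  set e : ℝ := (d : ℝ) with hedef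
  have he1 : 1 ≤ e := by rw [hedef]; exact_mod_cast hd.1
  have he9 : e + 1 ≤ 10 := by
    have h9 : (d : ℝ) ≤ 9 := by exact_mod_cast hd.2
    rw [hedef]; linarith
  have hepos : 0 < e := by linarith
  set L : ℝ := Real.log ((e + 1) / e) with hLdef
  have hLpos : 0 < L := Real.log_pos (by rw [lt_div_iff₀ hepos]; linarith)
  -- the event as preimage
  have hsetA : {u : ℝ | ⌊u⌋ = (d : ℤ)} = Set.Ico e (e + 1) := by
    ext u
    simp only [Set.mem_setOf_eq, Set.mem_Ico, Int.floor_eq_iff, hedef]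
    norm_num
  have hmeasA : MeasurableSet {u : ℝ | ⌊u⌋ = (d : ℤ)} := by
    rw [hsetA]; exact measurableSet_Ico
  have hevent : {ω | ⌊S ω⌋ = (d : ℤ)} = S ⁻¹' {u : ℝ | ⌊u⌋ = (d : ℤ)} := rfl
  have hsub : Set.Ico e (e + 1) ⊆ Set.Ico (1 : ℝ) 10 := by
    intro u hu
    exact ⟨le_trans he1 hu.1, lt_of_lt_of_le hu.2 he9⟩
  -- restrict of the law to the set
  have hrestrict : (Measure.map S μ).restrict (Set.Ico e (e + 1))
      = (volume.restrict (Set.Ico e (e + 1))).withDensity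
          (fun u => ENNReal.ofReal (C / u)) := by
    rw [hlaw, restrict_withDensity measurableSet_Ico,
      Measure.restrict_restrict measurableSet_Ico,
      Set.inter_eq_self_of_subset_left hsub]
  -- integrability facts
  have hcont : ContinuousOn (fun u : ℝ => C / u) (Set.Icc e (e + 1)) := by
    apply ContinuousOn.div continuousOn_const continuousOn_id
    intro u hu; exact ne_of_gt (lt_of_lt_of_le hepos hu.1)
  have hint1 : IntegrableOn (fun u : ℝ => C / u) (Set.Ico e (e + 1)) volume :=
    (hcont.integrableOn_Icc).mono_set Set.Ico_subset_Icc_self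
  -- denominator computation
  have hIoc : ∫ u in Set.Ioc e (e+1), C / u = C * L := by
    rw [← intervalIntegral.integral_of_le (by linarith : e ≤ e + 1)]
    have : ∀ u, C / u = C * u⁻¹ := fun u => div_eq_mul_inv C u
    simp_rw [this]
    rw [intervalIntegral.integral_const_mul, integral_inv_of_pos hepos (by linarith)]
  have hIco_eq : ∫ u in Set.Ico e (e+1), C / u = ∫ u in Set.Ioc e (e+1), C / u := by
    rw [integral_Ico_eq_integral_Ioo, integral_Ioc_eq_integral_Ioo]
  have hmass : μ {ω | ⌊S ω⌋ = (d : ℤ)} = ENNReal.ofReal (C * L) := by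
    rw [hevent, ← Measure.map_apply hS hmeasA, hlaw, withDensity_apply _ hmeasA,
      hsetA, Measure.restrict_restrict measurableSet_Ico,
      Set.inter_eq_self_of_subset_left hsub]
    rw [← ofReal_integral_eq_lintegral_ofReal hint1]
    · rw [hIco_eq, hIoc]
    · filter_upwards [ae_restrict_mem measurableSet_Ico] with u hu
      have : 0 < u := lt_of_lt_of_le hepos hu.1
      positivity
  -- numerator
  have hfm : Measurable fun u : ℝ => Int.fract u := measurable_fract
  have hnum : (∫ ω in {ω | ⌊S ω⌋ = (d : ℤ)}, Int.fract (S ω) ∂μ)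
      = ∫ u in Set.Ico e (e+1), Int.fract u ∂(Measure.map S μ) := by
    rw [hevent, ← hsetA]
    rw [← setIntegral_map hmeasA hfm.aestronglyMeasurable hS.aemeasurable]
  have hdens_nn : (fun u : ℝ => ENNReal.ofReal (C / u))
      = fun u => ((Real.toNNReal (C / u) : ℝ≥0) : ℝ≥0∞) := rfl
  have hnn_meas : Measurable fun u : ℝ => Real.toNNReal (C / u) :=
    (measurable_const.div measurable_id).real_toNNReal
  have hnum2 : ∫ u in Set.Ico e (e+1), Int.fract u ∂(Measure.map S μ)
      = ∫ u in Set.Ico e (e+1), (Real.toNNReal (C / u) : ℝ) • Int.fract u := by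
    rw [hlaw, hdens_nn,
      setIntegral_withDensity_eq_setIntegral_smul hnn_meas _ measurableSet_Ico]
    rw [Measure.restrict_restrict measurableSet_Ico,
      Set.inter_eq_self_of_subset_left hsub]
    simp [NNReal.smul_def]
  have hnum3 : ∫ u in Set.Ico e (e+1), (Real.toNNReal (C / u) : ℝ) • Int.fract u
      = ∫ u in Set.Ioc e (e+1), C - e * C / u := by
    rw [integral_Ico_eq_integral_Ioo, integral_Ioc_eq_integral_Ioo]
    apply setIntegral_congr_fun measurableSet_Ioo
    intro u hu
    have hu0 : 0 < u := lt_of_lt_of_le hepos hu.1.le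
    have hfr : Int.fract u = u - e := by
      have hfl : ⌊u⌋ = (d : ℤ) := by
        rw [Int.floor_eq_iff]
        constructor
        · push_cast; rw [← hedef]; exact hu.1.le
        · push_cast; rw [← hedef]; exact hu.2
      rw [Int.fract, hfl, hedef]
      push_cast
      ring
    show (((C / u).toNNReal : ℝ)) • Int.fract u = C - e * C / u
    rw [Real.coe_toNNReal _ (by positivity), smul_eq_mul, hfr]
    field_simp
  have hnumval : ∫ u in Set.Ioc e (e+1), C - e * C / u = C - e * C * L := by
    rw [← intervalIntegral.integral_of_le (by linarith : e ≤ e + 1)]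
    have hint2 : IntervalIntegrable (fun u : ℝ => e * C / u) volume e (e+1) := by
      apply ContinuousOn.intervalIntegrable
      rw [Set.uIcc_of_le (by linarith)]
      apply ContinuousOn.div continuousOn_const continuousOn_id
      intro u hu; exact ne_of_gt (lt_of_lt_of_le hepos hu.1)
    rw [intervalIntegral.integral_sub intervalIntegrable_const hint2]
    have : ∀ u : ℝ, e * C / u = (e * C) * u⁻¹ := fun u => div_eq_mul_inv _ u
    simp_rw [this]
    rw [intervalIntegral.integral_const_mul, integral_inv_of_pos hepos (by linarith),
      intervalIntegral.integral_const]
    simp [← hLdef]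
  -- put it together
  rw [hnum, hnum2, hnum3, hnumval, hmass, ENNReal.toReal_ofReal (by positivity)]
  have hlogb : Real.logb 10 (((d : ℝ) + 1) / d) = L / Real.log 10 := by
    rw [Real.logb, hLdef, hedef]
  rw [hlogb, hC]
  have h1 : L ≠ 0 := hLpos.ne'
  have h2 : Real.log 10 ≠ 0 := hlog10.ne'
  field_simp
end

section
/- If X is a Benford random variable, then the correlation between D(X) and ⟨S(X)⟩ equals (45C − Var[D(X)] − 9C·E[D(X)]) / √(Var[D(X)]·(Var[D(X)] + 18C·E[D(X)] − 81C(C + 1/2))), where C = log₁₀ e; in particular this correlation is strictly positive. -/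
/-!
Write `C = log₁₀ e`, `D = ⌊S⌋`. On `[d, d + 1)` the digit is constant, so integrating the density
`C / u` piece by piece gives `E[g(D)] = ∑ g(d) log₁₀((d + 1) / d)`, `E[S g(D)] = C ∑ g(d)` and
`E[S²] = 99C/2`. Since `⟨S⟩ = S - D`, all moments of `⟨S⟩` reduce to these:
`E⟨S⟩ = 9C - E[D]`, `E[D⟨S⟩] = 45C - E[D²]` and `E[⟨S⟩²] = E[D²] - 81C/2`, which yields the
closed form. The sign is numerical: `E[D]` and `E[D²]` are integer combinations of
`log 2, log 3, log 5, log 7` divided by `log 10`, and the covariance is only about `0.04`, so these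
logarithms are pinned down to `~10⁻⁶` by `1 - 1/y ≤ log y ≤ y - 1` at `y = bᵏ / 2ʲ ≈ 1`.
-/

open MeasureTheory Real Set
open scoped Interval

lemma ae_floor_eq_of_mem_uIoc (k : ℤ) : ∀ᵐ x ∂volume.restrict (Ι (k : ℝ) (k + 1)), ⌊x⌋ = k := by
  rw [uIoc_of_le (by linarith), ← restrict_Ioo_eq_restrict_Ioc]
  filter_upwards [ae_restrict_mem measurableSet_Ioo] with x hx
  exact Int.floor_eq_iff.2 ⟨hx.1.le, hx.2⟩

lemma intervalIntegral_mul_floor (k : ℤ) (f : ℝ → ℝ) (g : ℝ → ℝ) :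
    ∫ x in (k : ℝ)..k + 1, f x * g ⌊x⌋ = (∫ x in (k : ℝ)..k + 1, f x) * g k := by
  rw [← intervalIntegral.integral_mul_const]
  refine intervalIntegral.integral_congr_ae_restrict ?_
  filter_upwards [ae_floor_eq_of_mem_uIoc k] with x hx
  rw [hx]

lemma IntervalIntegrable.mul_floor {k : ℤ} {f : ℝ → ℝ}
    (hf : IntervalIntegrable f volume k (k + 1)) (g : ℝ → ℝ) :
    IntervalIntegrable (fun x => f x * g ⌊x⌋) volume k (k + 1) := by
  refine (hf.mul_const (g k)).congr_ae ?_
  filter_upwards [ae_floor_eq_of_mem_uIoc k] with x hx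
  rw [hx]

lemma setIntegral_Ico_eq_sum_intervalIntegral (a : ℝ) (n : ℕ) {f : ℝ → ℝ}
    (hf : ∀ k < n, IntervalIntegrable f volume (a + k) (a + k + 1)) :
    ∫ x in Ico a (a + n), f x = ∑ k ∈ Finset.range n, ∫ x in (a + k)..(a + k + 1), f x := by
  have hsucc (k : ℕ) : a + ((k + 1 : ℕ) : ℝ) = a + k + 1 := by push_cast; ring
  have hsum := intervalIntegral.sum_integral_adjacent_intervals (a := fun k : ℕ => a + k)
    fun k hk => hsucc k ▸ hf k hk
  simp only [hsucc, Nat.cast_zero, add_zero] at hsum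
  rw [integral_Ico_eq_integral_Ioc, ← intervalIntegral.integral_of_le (by simp), hsum]

lemma setIntegral_Ico_mul_floor (n : ℕ) {f : ℝ → ℝ} (hf : ContinuousOn f (Ici 1)) (g : ℝ → ℝ) :
    ∫ x in Ico (1 : ℝ) (1 + n), f x * g ⌊x⌋
      = ∑ k ∈ Finset.range n, (∫ x in (k + 1 : ℝ)..k + 2, f x) * g (k + 1) := by
  have hcast (k : ℕ) : (1 : ℝ) + k = ((k + 1 : ℤ) : ℝ) := by push_cast; ring
  have hpiece (k : ℕ) : IntervalIntegrable f volume ((k + 1 : ℤ) : ℝ) ((k + 1 : ℤ) + 1) := by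
    refine (hf.mono fun x hx => ?_).intervalIntegrable
    rw [uIcc_of_le (by linarith)] at hx
    push_cast at hx
    exact le_trans (by linarith [Nat.cast_nonneg (α := ℝ) k]) hx.1
  rw [setIntegral_Ico_eq_sum_intervalIntegral 1 n fun k _ => hcast k ▸ (hpiece k).mul_floor g]
  refine Finset.sum_congr rfl fun k _ => ?_
  rw [hcast, intervalIntegral_mul_floor]
  push_cast
  ring_nf

lemma intervalIntegral_const_div {a b : ℝ} (ha : 0 < a) (hb : 0 < b) (c : ℝ) :
    ∫ x in a..b, c / x = c * log (b / a) := by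
  simp only [div_eq_mul_inv c]
  rw [intervalIntegral.integral_const_mul, integral_inv_of_pos ha hb]

lemma intervalIntegral_const_div_mul_pow {a b : ℝ} (ha : 0 < a) (hb : 0 < b) (c : ℝ) (j : ℕ) :
    ∫ x in a..b, c / x * x ^ (j + 1) = c * ((b ^ (j + 1) - a ^ (j + 1)) / (j + 1)) := by
  have hx : EqOn (fun x => c / x * x ^ (j + 1)) (fun x => c * x ^ j) [[a, b]] := fun x hx => by
    have : x ≠ 0 := ((lt_min ha hb).trans_le hx.1).ne'
    field_simp
    ring
  rw [intervalIntegral.integral_congr hx, intervalIntegral.integral_const_mul, integral_pow]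

lemma logb_ten_exp_one : logb 10 (exp 1) = (log 10)⁻¹ := by
  rw [logb, log_exp, one_div]

section PushForward

variable {Ω α : Type*} [MeasurableSpace Ω] [MeasurableSpace α] {μ : Measure Ω} {S : Ω → α}

lemma ae_mem_of_map_eq_withDensity {ν : Measure α} {s : Set α} {f : α → ENNReal}
    (hS : AEMeasurable S μ) (hs : MeasurableSet s) (hlaw : μ.map S = (ν.restrict s).withDensity f) :
    ∀ᵐ ω ∂μ, S ω ∈ s :=
  ae_of_ae_map hS <| hlaw ▸ (withDensity_absolutelyContinuous _ f).ae_le (ae_restrict_mem hs)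

lemma integral_comp_eq_setIntegral_of_map_eq_withDensity {ν : Measure α} {s : Set α} {ρ : α → ℝ}
    (hS : Measurable S) (hs : MeasurableSet s) (hρ : Measurable ρ) (hρ₀ : ∀ x ∈ s, 0 ≤ ρ x)
    (hlaw : μ.map S = (ν.restrict s).withDensity fun x => ENNReal.ofReal (ρ x))
    {g : α → ℝ} (hg : Measurable g) :
    ∫ ω, g (S ω) ∂μ = ∫ x in s, ρ x * g x ∂ν := by
  rw [← integral_map hS.aemeasurable hg.aestronglyMeasurable, hlaw,
    integral_withDensity_eq_integral_toReal_smul (by fun_prop)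
      (ae_of_all _ fun _ => ENNReal.ofReal_lt_top)]
  exact setIntegral_congr_fun hs fun x hx => by simp [ENNReal.toReal_ofReal (hρ₀ x hx)]

end PushForward

lemma integrable_comp_floor_of_ae_mem_Icc {Ω : Type*} [MeasurableSpace Ω] {μ : Measure Ω}
    [IsFiniteMeasure μ] {S : Ω → ℝ} (hS : Measurable S) {a b : ℝ}
    (hab : ∀ᵐ ω ∂μ, S ω ∈ Icc a b) {P : ℝ → ℝ → ℝ} (hP : Continuous (Function.uncurry P)) :
    Integrable (fun ω => P ⌊S ω⌋ (S ω)) μ := by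
  obtain ⟨M, hM⟩ := (isCompact_Icc.prod isCompact_Icc).exists_bound_of_continuousOn
    (s := Icc (a - 1) b ×ˢ Icc a b) hP.continuousOn
  have hmeas : Measurable fun ω => P ⌊S ω⌋ (S ω) :=
    hP.measurable.comp ((measurable_from_top.comp (Int.measurable_floor.comp hS)).prodMk hS)
  refine Integrable.of_bound hmeas.aestronglyMeasurable M ?_
  filter_upwards [hab] with ω hω
  exact hM (⌊S ω⌋, S ω)
    ⟨⟨by linarith [Int.sub_one_lt_floor (S ω), hω.1], (Int.floor_le _).trans hω.2⟩, hω⟩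

lemma Ico_one_ten_eq : Ico (1 : ℝ) 10 = Ico 1 (1 + ((9 : ℕ) : ℝ)) := by norm_num

lemma sum_range_nine_add_one : ∑ k ∈ Finset.range 9, ((k : ℝ) + 1) = 45 := by
  norm_num [Finset.sum_range_succ]

def IsBenford {Ω : Type*} [MeasurableSpace Ω] (S : Ω → ℝ) (μ : Measure Ω) : Prop :=
  μ.map S = (volume.restrict (Ico (1 : ℝ) 10)).withDensity
    fun u => ENNReal.ofReal (logb 10 (exp 1) / u)

namespace IsBenford

variable {Ω : Type*} [MeasurableSpace Ω] {μ : Measure Ω} {S : Ω → ℝ}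

theorem integral_comp (h : IsBenford S μ) (hS : Measurable S) {g : ℝ → ℝ} (hg : Measurable g) :
    ∫ ω, g (S ω) ∂μ = ∫ x in Ico (1 : ℝ) 10, logb 10 (exp 1) / x * g x := by
  refine integral_comp_eq_setIntegral_of_map_eq_withDensity hS measurableSet_Ico (by fun_prop)
    (fun x hx => ?_) h hg
  rw [logb_ten_exp_one]
  exact div_nonneg (inv_nonneg.2 (log_nonneg (by norm_num))) (by linarith [hx.1])

theorem ae_mem_Ico (h : IsBenford S μ) (hS : Measurable S) : ∀ᵐ ω ∂μ, S ω ∈ Ico (1 : ℝ) 10 :=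
  ae_mem_of_map_eq_withDensity hS.aemeasurable measurableSet_Ico h

theorem integrable [IsFiniteMeasure μ] (h : IsBenford S μ) (hS : Measurable S)
    {P : ℝ → ℝ → ℝ} (hP : Continuous (Function.uncurry P)) :
    Integrable (fun ω => P ⌊S ω⌋ (S ω)) μ :=
  integrable_comp_floor_of_ae_mem_Icc hS
    ((h.ae_mem_Ico hS).mono fun _ hω => Ico_subset_Icc_self hω) hP

theorem integral_floor (h : IsBenford S μ) (hS : Measurable S) (g : ℝ → ℝ) :
    ∫ ω, g ⌊S ω⌋ ∂μ = ∑ k ∈ Finset.range 9, logb 10 ((k + 2) / (k + 1)) * g (k + 1) := by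
  rw [h.integral_comp hS (g := fun x => g ⌊x⌋)
    ((measurable_from_top (f := fun d : ℤ => g d)).comp Int.measurable_floor),
    Ico_one_ten_eq,
    setIntegral_Ico_mul_floor 9 (by fun_prop (disch := intro x hx; linarith [hx.out]))]
  refine Finset.sum_congr rfl fun k _ => ?_
  rw [intervalIntegral_const_div (by positivity) (by positivity), logb_ten_exp_one, logb]
  ring_nf

theorem integral_mul_floor (h : IsBenford S μ) (hS : Measurable S) (g : ℝ → ℝ) :
    ∫ ω, S ω * g ⌊S ω⌋ ∂μ = ∑ k ∈ Finset.range 9, logb 10 (exp 1) * g (k + 1) := by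
  rw [h.integral_comp hS (g := fun x => x * g ⌊x⌋)
    (measurable_id.mul ((measurable_from_top (f := fun d : ℤ => g d)).comp Int.measurable_floor))]
  simp_rw [← mul_assoc]
  rw [Ico_one_ten_eq,
    setIntegral_Ico_mul_floor 9 (by fun_prop (disch := intro x hx; linarith [hx.out]))]
  refine Finset.sum_congr rfl fun k _ => ?_
  have hpiece := intervalIntegral_const_div_mul_pow (a := k + 1) (b := k + 2)
    (by positivity) (by positivity) (logb 10 (exp 1)) 0
  simp only [zero_add, pow_one, Nat.cast_zero] at hpiece
  rw [hpiece]
  ring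

theorem integral_pow (h : IsBenford S μ) (hS : Measurable S) (j : ℕ) :
    ∫ ω, S ω ^ (j + 1) ∂μ = logb 10 (exp 1) * ((10 ^ (j + 1) - 1) / (j + 1)) := by
  rw [h.integral_comp hS (g := fun x => x ^ (j + 1)) (by fun_prop), integral_Ico_eq_integral_Ioc,
    ← intervalIntegral.integral_of_le (by norm_num),
    intervalIntegral_const_div_mul_pow (by norm_num) (by norm_num), one_pow]

variable [IsFiniteMeasure μ]

theorem integral_fract (h : IsBenford S μ) (hS : Measurable S) :
    ∫ ω, Int.fract (S ω) ∂μ = 9 * logb 10 (exp 1) - ∫ ω, (⌊S ω⌋ : ℝ) ∂μ := by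
  have hmean : ∫ ω, S ω ∂μ = 9 * logb 10 (exp 1) := by
    simpa using (h.integral_pow hS 0).trans (by norm_num [mul_comm])
  simp_rw [← Int.self_sub_floor]
  rw [integral_sub (h.integrable hS (P := fun _ x => x) (by fun_prop))
    (h.integrable hS (P := fun d _ => d) (by fun_prop)), hmean]

theorem integral_floor_mul_fract (h : IsBenford S μ) (hS : Measurable S) :
    ∫ ω, (⌊S ω⌋ : ℝ) * Int.fract (S ω) ∂μ = 45 * logb 10 (exp 1) - ∫ ω, (⌊S ω⌋ : ℝ) ^ 2 ∂μ := by
  simp_rw [← Int.self_sub_floor, mul_sub, mul_comm _ (S _), ← sq]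
  rw [integral_sub (h.integrable hS (P := fun d x => x * d) (by fun_prop))
    (h.integrable hS (P := fun d _ => d ^ 2) (by fun_prop)), h.integral_mul_floor hS fun x => x,
    ← Finset.mul_sum, sum_range_nine_add_one]
  ring

theorem integral_fract_sq (h : IsBenford S μ) (hS : Measurable S) :
    ∫ ω, Int.fract (S ω) ^ 2 ∂μ = ∫ ω, (⌊S ω⌋ : ℝ) ^ 2 ∂μ - 81 / 2 * logb 10 (exp 1) := by
  have hsq (x : ℝ) : Int.fract x ^ 2 = x ^ (1 + 1) - 2 * (x * ⌊x⌋) + (⌊x⌋ : ℝ) ^ 2 := by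
    rw [← Int.self_sub_floor]; ring
  simp_rw [hsq]
  rw [integral_add (h.integrable hS (P := fun d x => x ^ (1 + 1) - 2 * (x * d)) (by fun_prop))
    (h.integrable hS (P := fun d _ => d ^ 2) (by fun_prop)),
    integral_sub (h.integrable hS (P := fun _ x => x ^ (1 + 1)) (by fun_prop))
    ((h.integrable hS (P := fun d x => x * d) (by fun_prop)).const_mul 2),
    integral_const_mul, h.integral_pow hS 1, h.integral_mul_floor hS fun x => x,
    ← Finset.mul_sum, sum_range_nine_add_one]
  ring

end IsBenford

lemma pow_div_two_pow_log_bounds {b : ℝ} (hb : 0 < b) (k j : ℕ) :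
    1 - 2 ^ j / b ^ k ≤ k * log b - j * log 2 ∧ k * log b - j * log 2 ≤ b ^ k / 2 ^ j - 1 := by
  have hy : 0 < b ^ k / 2 ^ j := by positivity
  have hlog : log (b ^ k / 2 ^ j) = k * log b - j * log 2 := by
    rw [log_div (by positivity) (by positivity), log_pow, log_pow]
  rw [← hlog]
  exact ⟨by simpa using one_sub_inv_le_log_of_pos hy, log_le_sub_one_of_pos hy⟩

lemma log_three_bounds : 1.09861224 < log 3 ∧ log 3 < 1.09861234 := by
  obtain ⟨h₁, h₂⟩ := pow_div_two_pow_log_bounds (b := 3) (by norm_num) 53 84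
  norm_num at h₁ h₂
  constructor <;> linarith [log_two_gt_d9, log_two_lt_d9]

lemma log_five_bounds : 1.6094362 < log 5 ∧ log 5 < 1.6094396 := by
  obtain ⟨h₁, h₂⟩ := pow_div_two_pow_log_bounds (b := 5) (by norm_num) 28 65
  norm_num at h₁ h₂
  constructor <;> linarith [log_two_gt_d9, log_two_lt_d9]

lemma log_seven_bounds : 1.9459094 < log 7 ∧ log 7 < 1.9459109 := by
  obtain ⟨h₁, h₂⟩ := pow_div_two_pow_log_bounds (b := 7) (by norm_num) 26 73
  norm_num at h₁ h₂
  constructor <;> linarith [log_two_gt_d9, log_two_lt_d9]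

lemma log_four_six_eight_nine_ten :
    log 4 = 2 * log 2 ∧ log 6 = log 2 + log 3 ∧ log 8 = 3 * log 2 ∧ log 9 = 2 * log 3 ∧
      log 10 = log 2 + log 5 := by
  refine ⟨?_, ?_, ?_, ?_, ?_⟩
  · rw [show (4 : ℝ) = 2 ^ 2 by norm_num, log_pow]; norm_num
  · rw [show (6 : ℝ) = 2 * 3 by norm_num, log_mul (by norm_num) (by norm_num)]
  · rw [show (8 : ℝ) = 2 ^ 3 by norm_num, log_pow]; norm_num
  · rw [show (9 : ℝ) = 3 ^ 2 by norm_num, log_pow]; norm_num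
  · rw [show (10 : ℝ) = 2 * 5 by norm_num, log_mul (by norm_num) (by norm_num)]

lemma log_add_two_div_add_one (k : ℕ) : log ((k + 2 : ℝ) / (k + 1)) = log (k + 2) - log (k + 1) :=
  log_div (by positivity) (by positivity)

lemma sum_log_succ_div_mul :
    ∑ k ∈ Finset.range 9, log ((k + 2) / (k + 1)) * (k + 1)
      = 2 * log 2 - 4 * log 3 + 8 * log 5 - log 7 := by
  obtain ⟨h4, h6, h8, h9, h10⟩ := log_four_six_eight_nine_ten
  simp only [log_add_two_div_add_one, Finset.sum_range_succ]
  norm_num [h4, h6, h8, h9, h10]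
  ring

lemma sum_log_succ_div_mul_sq :
    ∑ k ∈ Finset.range 9, log ((k + 2) / (k + 1)) * (k + 1) ^ 2
      = 8 * log 2 - 50 * log 3 + 72 * log 5 - 13 * log 7 := by
  obtain ⟨h4, h6, h8, h9, h10⟩ := log_four_six_eight_nine_ten
  simp only [log_add_two_div_add_one, Finset.sum_range_succ]
  norm_num [h4, h6, h8, h9, h10]
  ring

lemma digit_moment_polynomials_pos {L A B : ℝ} (hL : 2.302583 < L ∧ L < 2.302587)
    (hA : 7.92142 < A ∧ A < 7.92146) (hB : 41.19712 < B ∧ B < 41.19740) :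
    0 < B * L - A ^ 2 ∧ 0 < 45 * L - (B * L - A ^ 2) - 9 * A ∧
      0 < B * L - A ^ 2 + 18 * A - 81 - 81 / 2 * L := by
  obtain ⟨hL₁, hL₂⟩ := hL
  obtain ⟨hA₁, hA₂⟩ := hA
  obtain ⟨hB₁, hB₂⟩ := hB
  refine ⟨?_, ?_, ?_⟩ <;> nlinarith [mul_pos (sub_pos.2 hL₁) (sub_pos.2 hB₁),
    mul_pos (sub_pos.2 hL₂) (sub_pos.2 hB₂), mul_pos (sub_pos.2 hA₁) (sub_pos.2 hA₂)]

lemma benford_digit_moment_inequalities {C ED ED2 V : ℝ} (hC : C = logb 10 (exp 1))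
    (hED : ED = ∑ k ∈ Finset.range 9, logb 10 ((k + 2) / (k + 1)) * (k + 1))
    (hED2 : ED2 = ∑ k ∈ Finset.range 9, logb 10 ((k + 2) / (k + 1)) * (k + 1) ^ 2)
    (hV : V = ED2 - ED ^ 2) :
    0 < V ∧ 0 < 45 * C - V - 9 * C * ED ∧ 0 < V + 18 * C * ED - 81 * C * (C + 1 / 2) := by
  obtain ⟨-, -, -, -, h10⟩ := log_four_six_eight_nine_ten
  have h2₁ := log_two_gt_d9
  have h2₂ := log_two_lt_d9
  obtain ⟨h3₁, h3₂⟩ := log_three_bounds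
  obtain ⟨h5₁, h5₂⟩ := log_five_bounds
  obtain ⟨h7₁, h7₂⟩ := log_seven_bounds
  obtain ⟨hLA, hcov, hvar⟩ := digit_moment_polynomials_pos (L := log 10)
    (A := ∑ k ∈ Finset.range 9, log ((k + 2) / (k + 1)) * (k + 1))
    (B := ∑ k ∈ Finset.range 9, log ((k + 2) / (k + 1)) * (k + 1) ^ 2)
    (by rw [h10]; constructor <;> linarith) (by rw [sum_log_succ_div_mul]; constructor <;> linarith)
    (by rw [sum_log_succ_div_mul_sq]; constructor <;> linarith)
  have hL : 0 < log 10 := log_pos (by norm_num)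
  simp only [logb, div_mul_eq_mul_div, ← Finset.sum_div, log_exp] at hC hED hED2
  subst hC hED hED2 hV
  generalize ∑ k ∈ Finset.range 9, log ((k + 2 : ℝ) / (k + 1)) * (k + 1) = A at *
  generalize ∑ k ∈ Finset.range 9, log ((k + 2 : ℝ) / (k + 1)) * (k + 1) ^ 2 = B at *
  refine ⟨(div_pos hLA (pow_pos hL 2)).trans_eq ?_, (div_pos hcov (pow_pos hL 2)).trans_eq ?_,
    (div_pos hvar (pow_pos hL 2)).trans_eq ?_⟩
  · field_simp
  · field_simp
  · field_simp
    ring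

/-- Correlation between the first digit `D(X)` and the fractional part `⟨S(X)⟩` of a
Benford random variable:
`cor = (45C − Var[D] − 9C·E[D]) / √(Var[D]·(Var[D] + 18C·E[D] − 81C(C+1/2)))`,
with `C = log₁₀ e`; in particular the correlation is strictly positive. -/
theorem benford_correlation {Ω : Type*} [MeasurableSpace Ω] (μ : Measure Ω)
    [IsProbabilityMeasure μ] (S : Ω → ℝ) (hS : Measurable S)
    (hlaw : Measure.map S μ
      = (volume.restrict (Set.Ico (1 : ℝ) 10)).withDensity
          (fun u => ENNReal.ofReal (Real.logb 10 (Real.exp 1) / u)))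
    (C ED ED2 VarD cor : ℝ)
    (hC : C = Real.logb 10 (Real.exp 1))
    (hED : ED = ∫ ω, ((⌊S ω⌋ : ℝ)) ∂μ)
    (hED2 : ED2 = ∫ ω, ((⌊S ω⌋ : ℝ)) ^ 2 ∂μ)
    (hVarD : VarD = ED2 - ED ^ 2)
    (hcor : cor =
      ((∫ ω, ((⌊S ω⌋ : ℝ)) * Int.fract (S ω) ∂μ) - ED * ∫ ω, Int.fract (S ω) ∂μ)
        / Real.sqrt (VarD *
            ((∫ ω, (Int.fract (S ω)) ^ 2 ∂μ) - (∫ ω, Int.fract (S ω) ∂μ) ^ 2))) :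
    cor = (45 * C - VarD - 9 * C * ED)
        / Real.sqrt (VarD * (VarD + 18 * C * ED - 81 * C * (C + 1 / 2)))
      ∧ 0 < cor := by
  have hB : IsBenford S μ := hlaw
  obtain ⟨hVarD_pos, hcov_pos, hvar_pos⟩ := benford_digit_moment_inequalities hC
    (hED.trans (hB.integral_floor hS fun x => x))
    (hED2.trans (hB.integral_floor hS fun x => x ^ 2)) hVarD
  rw [hB.integral_floor_mul_fract hS, hB.integral_fract hS, hB.integral_fract_sq hS, ← hC, ← hED,
    ← hED2] at hcor
  have hcov : 45 * C - ED2 - ED * (9 * C - ED) = 45 * C - VarD - 9 * C * ED := by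
    rw [hVarD]; ring
  have hvar : ED2 - 81 / 2 * C - (9 * C - ED) ^ 2 = VarD + 18 * C * ED - 81 * C * (C + 1 / 2) := by
    rw [hVarD]; ring
  rw [hcov, hvar] at hcor
  exact ⟨hcor, hcor ▸ div_pos hcov_pos (sqrt_pos.2 (mul_pos hVarD_pos hvar_pos))⟩
end

section
/- If X_A and X_B are independent random variables, X_A is Benford and X_B is Benford, and S(X) is defined by S(X) = D(X_A) + ⟨S(X_B)⟩, then S(X) does not have the Benford distribution, i.e., P(S(X) ≤ u) ≠ log₁₀ u for some u ∈ [1,10). -/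
open MeasureTheory

/-- Under the manipulated-Benford model `S(X) = D(X_A) + ⟨S(X_B)⟩` with `X_A, X_B`
independent Benford random variables, `S(X)` does not have the Benford distribution:
its CDF differs from `log₁₀ u` at some `u ∈ [1,10)`. -/
theorem manipulated_benford_not_benford {Ω : Type*} [MeasurableSpace Ω] (μ : Measure Ω)
    [IsProbabilityMeasure μ] (SA SB : Ω → ℝ) (hSA : Measurable SA) (hSB : Measurable SB)
    (hArange : ∀ ω, SA ω ∈ Set.Ico (1 : ℝ) 10)
    (hBrange : ∀ ω, SB ω ∈ Set.Ico (1 : ℝ) 10)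
    (hA : ∀ u ∈ Set.Ico (1 : ℝ) 10, (μ {ω | SA ω ≤ u}).toReal = Real.logb 10 u)
    (hB : ∀ u ∈ Set.Ico (1 : ℝ) 10, (μ {ω | SB ω ≤ u}).toReal = Real.logb 10 u)
    (hindep : ProbabilityTheory.IndepFun SA SB μ) :
    ∃ u ∈ Set.Ico (1 : ℝ) 10,
      (μ {ω | (⌊SA ω⌋ : ℝ) + Int.fract (SB ω) ≤ u}).toReal ≠ Real.logb 10 u := by
  -- CDF of `SA` at strict inequalities
  have key : ∀ c : ℝ, 1 < c → c < 10 →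
      (μ {ω | SA ω < c}).toReal = Real.logb 10 c := by
    intro c hc1 hc10
    set m := (μ {ω | SA ω < c}).toReal with hm
    have hfin : ∀ s : Set Ω, μ s ≠ ⊤ := fun s => measure_ne_top μ s
    have hle : m ≤ Real.logb 10 c := by
      rw [← hA c ⟨hc1.le, hc10⟩]
      exact ENNReal.toReal_mono (hfin _) (measure_mono fun ω (h : SA ω < c) => le_of_lt h)
    rcases lt_or_eq_of_le hle with hlt | heq
    · exfalso
      have hm0 : (0:ℝ) ≤ m := ENNReal.toReal_nonneg
      set t := (m + Real.logb 10 c) / 2 with ht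
      have htm : m < t := by rw [ht]; linarith
      have htc : t < Real.logb 10 c := by rw [ht]; linarith
      have ht0 : (0:ℝ) ≤ t := le_of_lt (lt_of_le_of_lt hm0 htm)
      set u := (10:ℝ) ^ t with hu
      have hu1 : (1:ℝ) ≤ u := Real.one_le_rpow (by norm_num) ht0
      have huc : u < c := by
        rw [hu]
        exact (Real.lt_logb_iff_rpow_lt (by norm_num) (by linarith)).mp htc
      have hcdfu : (μ {ω | SA ω ≤ u}).toReal = t := by
        rw [hA u ⟨hu1, lt_trans huc hc10⟩, hu,
          Real.logb_rpow (by norm_num) (by norm_num)]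
      have : (μ {ω | SA ω ≤ u}).toReal ≤ m :=
        ENNReal.toReal_mono (hfin _) (measure_mono fun ω h => lt_of_le_of_lt h huc)
      rw [hcdfu] at this
      linarith
    · exact heq
  by_contra hcon
  push_neg at hcon
  -- the event on fractional parts
  set F : Set ℝ := Int.fract ⁻¹' Set.Iic (1/2 : ℝ) with hF
  have hFmeas : MeasurableSet F := measurable_fract measurableSet_Iic
  set G := (μ (SB ⁻¹' F)).toReal with hG
  -- floor facts
  have hfloor1 : ∀ ω, (1:ℤ) ≤ ⌊SA ω⌋ := fun ω =>
    Int.le_floor.2 (by exact_mod_cast (hArange ω).1)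
  have hfract0 : ∀ ω, (0:ℝ) ≤ Int.fract (SB ω) := fun ω => Int.fract_nonneg _
  have hfract1 : ∀ ω, Int.fract (SB ω) < 1 := fun ω => Int.fract_lt_one _
  -- event identities
  have hE1 : {ω | (⌊SA ω⌋ : ℝ) + Int.fract (SB ω) ≤ 3/2}
      = SA ⁻¹' Set.Iio 2 ∩ SB ⁻¹' F := by
    ext ω
    have h1 := hfloor1 ω
    have h1' : (1:ℝ) ≤ (⌊SA ω⌋ : ℝ) := by exact_mod_cast h1
    have h0 := hfract0 ω
    constructor
    · intro h
      have hfle : (⌊SA ω⌋ : ℝ) ≤ 3/2 := by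
        simp only [Set.mem_setOf_eq] at h; linarith
      have hcast : (⌊SA ω⌋ : ℝ) < 2 := by linarith
      have : ⌊SA ω⌋ < 2 := by exact_mod_cast hcast
      have hfeq : ⌊SA ω⌋ = 1 := le_antisymm (by omega) h1
      constructor
      · have := Int.lt_floor_add_one (SA ω)
        simp only [Set.mem_preimage, Set.mem_Iio]
        rw [hfeq] at this; push_cast at this; linarith
      · simp only [Set.mem_setOf_eq] at h
        simp only [hF, Set.mem_preimage, Set.mem_Iic]
        rw [hfeq] at h; push_cast at h; linarith
    · rintro ⟨hlt, hf⟩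
      simp only [Set.mem_preimage, Set.mem_Iio] at hlt
      simp only [hF, Set.mem_preimage, Set.mem_Iic] at hf
      have : ⌊SA ω⌋ < 2 := Int.floor_lt.2 (by exact_mod_cast hlt)
      have hfeq : ⌊SA ω⌋ = 1 := le_antisymm (by omega) h1
      simp only [Set.mem_setOf_eq, hfeq]
      push_cast
      linarith
  have hE2 : {ω | (⌊SA ω⌋ : ℝ) + Int.fract (SB ω) ≤ 5/2}
      = SA ⁻¹' Set.Iio 2 ∪ (SA ⁻¹' Set.Ico 2 3 ∩ SB ⁻¹' F) := by
    ext ω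
    have h1 := hfloor1 ω
    have h1' : (1:ℝ) ≤ (⌊SA ω⌋ : ℝ) := by exact_mod_cast h1
    have h0 := hfract0 ω
    have hf1 := hfract1 ω
    have hfl := Int.floor_le (SA ω)
    have hfl1 := Int.lt_floor_add_one (SA ω)
    constructor
    · intro h
      simp only [Set.mem_setOf_eq] at h
      have hfle : (⌊SA ω⌋ : ℝ) ≤ 5/2 := by linarith
      have hcast : (⌊SA ω⌋ : ℝ) < 3 := by linarith
      have h2 : ⌊SA ω⌋ < 3 := by exact_mod_cast hcast
      rcases eq_or_lt_of_le h1 with hfeq | hgt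
      · left
        simp only [Set.mem_preimage, Set.mem_Iio]
        rw [← hfeq] at hfl1; push_cast at hfl1; linarith
      · right
        have hfeq : ⌊SA ω⌋ = 2 := by omega
        constructor
        · simp only [Set.mem_preimage, Set.mem_Ico]
          rw [hfeq] at hfl hfl1; push_cast at hfl hfl1
          exact ⟨by linarith, by linarith⟩
        · simp only [hF, Set.mem_preimage, Set.mem_Iic]
          rw [hfeq] at h; push_cast at h; linarith
    · intro h
      simp only [Set.mem_setOf_eq]
      rcases h with hlt | ⟨hico, hf⟩
      · simp only [Set.mem_preimage, Set.mem_Iio] at hlt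
        have : ⌊SA ω⌋ < 2 := Int.floor_lt.2 (by exact_mod_cast hlt)
        have hfeq : ⌊SA ω⌋ = 1 := le_antisymm (by omega) h1
        rw [hfeq]; push_cast; linarith
      · simp only [Set.mem_preimage, Set.mem_Ico] at hico
        simp only [hF, Set.mem_preimage, Set.mem_Iic] at hf
        have hlo : (2:ℤ) ≤ ⌊SA ω⌋ := Int.le_floor.2 (by exact_mod_cast hico.1)
        have hhi : ⌊SA ω⌋ < 3 := Int.floor_lt.2 (by exact_mod_cast hico.2)
        have hfeq : ⌊SA ω⌋ = 2 := by omega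
        rw [hfeq]; push_cast; linarith
  -- measures of SA-events
  have hIio2 : SA ⁻¹' Set.Iio 2 = {ω | SA ω < 2} := rfl
  have hIio3 : SA ⁻¹' Set.Iio 3 = {ω | SA ω < 3} := rfl
  have h2 : (μ (SA ⁻¹' Set.Iio 2)).toReal = Real.logb 10 2 := by
    rw [hIio2]; exact key 2 (by norm_num) (by norm_num)
  have h3 : (μ (SA ⁻¹' Set.Iio 3)).toReal = Real.logb 10 3 := by
    rw [hIio3]; exact key 3 (by norm_num) (by norm_num)
  -- measure of the Ico part
  have hsplit : SA ⁻¹' Set.Iio 3 = SA ⁻¹' Set.Iio 2 ∪ SA ⁻¹' Set.Ico 2 3 := by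
    rw [← Set.preimage_union, Set.Iio_union_Ico_eq_Iio (by norm_num : (2:ℝ) ≤ 3)]
  have hdisj : Disjoint (SA ⁻¹' Set.Iio 2) (SA ⁻¹' Set.Ico 2 3) :=
    Set.disjoint_left.2 fun ω h1 h2 => absurd h2.1 (not_le.2 h1)
  have hIcoMeas : MeasurableSet (SA ⁻¹' Set.Ico 2 3) := hSA measurableSet_Ico
  have hIco : (μ (SA ⁻¹' Set.Ico 2 3)).toReal = Real.logb 10 3 - Real.logb 10 2 := by
    have := measure_union (μ := μ) hdisj hIcoMeas
    rw [← hsplit] at this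
    have h' : (μ (SA ⁻¹' Set.Iio 3)).toReal
        = (μ (SA ⁻¹' Set.Iio 2)).toReal + (μ (SA ⁻¹' Set.Ico 2 3)).toReal := by
      rw [this, ENNReal.toReal_add (measure_ne_top μ _) (measure_ne_top μ _)]
    rw [h2, h3] at h'
    linarith
  -- independence
  have hind2 : (μ (SA ⁻¹' Set.Iio 2 ∩ SB ⁻¹' F)).toReal = Real.logb 10 2 * G := by
    rw [hindep.measure_inter_preimage_eq_mul _ _ measurableSet_Iio hFmeas,
      ENNReal.toReal_mul, h2, hG]
  have hindIco : (μ (SA ⁻¹' Set.Ico 2 3 ∩ SB ⁻¹' F)).toReal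
      = (Real.logb 10 3 - Real.logb 10 2) * G := by
    rw [hindep.measure_inter_preimage_eq_mul _ _ measurableSet_Ico hFmeas,
      ENNReal.toReal_mul, hIco, hG]
  -- equation 1, at u = 3/2
  have heq1 : Real.logb 10 2 * G = Real.logb 10 (3/2) := by
    rw [← hind2, ← hE1]
    exact hcon (3/2) ⟨by norm_num, by norm_num⟩
  -- equation 2, at u = 5/2
  have heq2 : Real.logb 10 2 + (Real.logb 10 3 - Real.logb 10 2) * G
      = Real.logb 10 (5/2) := by
    have hdisj2 : Disjoint (SA ⁻¹' Set.Iio 2) (SA ⁻¹' Set.Ico 2 3 ∩ SB ⁻¹' F) :=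
      hdisj.mono_right Set.inter_subset_left
    have hmeas2 : MeasurableSet (SA ⁻¹' Set.Ico 2 3 ∩ SB ⁻¹' F) :=
      hIcoMeas.inter (hSB hFmeas)
    have := measure_union (μ := μ) hdisj2 hmeas2
    rw [← hE2] at this
    have h' : (μ {ω | (⌊SA ω⌋ : ℝ) + Int.fract (SB ω) ≤ 5/2}).toReal
        = (μ (SA ⁻¹' Set.Iio 2)).toReal
          + (μ (SA ⁻¹' Set.Ico 2 3 ∩ SB ⁻¹' F)).toReal := by
      rw [this, ENNReal.toReal_add (measure_ne_top μ _) (measure_ne_top μ _)]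
    rw [h2, hindIco, hcon (5/2) ⟨by norm_num, by norm_num⟩] at h'
    linarith
  -- derive the impossible identity logb(3/2)^2 = logb 2 * logb(5/4)
  set a := Real.logb 10 2 with ha
  set L32 := Real.logb 10 (3/2 : ℝ) with hL32
  set L54 := Real.logb 10 (5/4 : ℝ) with hL54
  have hba : Real.logb 10 3 - a = L32 := by
    rw [hL32, ha, Real.logb_div (by norm_num) (by norm_num)]
  have h54 : Real.logb 10 (5/2 : ℝ) - a = L54 := by
    rw [hL54, ha, ← Real.logb_div (by norm_num) (by norm_num)]
    norm_num
  have hkey : L32 ^ 2 = a * L54 := by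
    have e1 : a * G = L32 := heq1
    have e2 : L32 * G = L54 := by
      rw [← hba, ← h54]; linarith [heq2]
    calc L32 ^ 2 = (a * G) * L32 := by rw [e1]; ring
      _ = a * (L32 * G) := by ring
      _ = a * L54 := by rw [e2]
  -- numeric contradiction: 12·L32 > 7·a and 3·L54 < a
  have ha0 : 0 < a := Real.logb_pos (by norm_num) (by norm_num)
  have hL320 : 0 < L32 := Real.logb_pos (by norm_num) (by norm_num)
  have h12 : 7 * a < 12 * L32 := by
    have : Real.logb 10 ((2:ℝ)^7) < Real.logb 10 ((3/2:ℝ)^12) :=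
      Real.logb_lt_logb (by norm_num) (by norm_num) (by norm_num)
    rw [Real.logb_pow, Real.logb_pow] at this
    push_cast at this
    rw [← ha, ← hL32] at this
    linarith
  have h3' : 3 * L54 < a := by
    have : Real.logb 10 ((5/4:ℝ)^3) < Real.logb 10 (2:ℝ) :=
      Real.logb_lt_logb (by norm_num) (by norm_num) (by norm_num)
    rw [Real.logb_pow] at this
    push_cast at this
    rw [← ha, ← hL54] at this
    linarith
  nlinarith [sq_nonneg a, sq_nonneg L32, mul_pos ha0 hL320]
end

section
/- If X is a Benford random variable, then for each d ∈ {1,...,9}, E[S(X)·𝟙{d ≤ S(X) < d+1}] = C, where C = log₁₀ e (the sum-invariance property). -/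
open MeasureTheory

/-! The density `C / u` of a Benford variable exactly cancels the factor `u` in `E[S · 𝟙{S ∈ A}]`,
so this expectation is `C` times the Lebesgue measure of `A`; each leading-digit interval
`[d, d + 1)` has length one. -/

theorem integral_indicator_id_withDensity_const_div {ν : Measure ℝ} {A : Set ℝ} {c : ℝ}
    (hc : 0 ≤ c) (hA : MeasurableSet A) (hApos : A ⊆ Set.Ioi 0) :
    ∫ u, A.indicator id u ∂ν.withDensity (fun u => ENNReal.ofReal (c / u)) = c * ν.real A := by
  have hcancel : ∀ u ∈ A, (ENNReal.ofReal (c / u)).toReal • id u = c := fun u hu => by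
    have hu : 0 < u := hApos hu
    rw [ENNReal.toReal_ofReal (div_nonneg hc hu.le), id, smul_eq_mul, div_mul_cancel₀ c hu.ne']
  rw [integral_withDensity_eq_integral_toReal_smul
      (by fun_prop : Measurable fun u : ℝ => ENNReal.ofReal (c / u))
      (ae_of_all _ fun _ => ENNReal.ofReal_lt_top)]
  calc ∫ u, (ENNReal.ofReal (c / u)).toReal • A.indicator id u ∂ν
      = ∫ u, A.indicator (fun _ => c) u ∂ν := by
        congr 1; funext u
        by_cases hu : u ∈ A
        · simp only [Set.indicator_of_mem hu, hcancel u hu]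
        · simp only [Set.indicator_of_notMem hu, smul_zero]
    _ = c * ν.real A := by rw [integral_indicator_const c hA, smul_eq_mul, mul_comm]

theorem benford_sum_invariance_general {Ω : Type*} [MeasurableSpace Ω] (μ : Measure Ω)
    (S : Ω → ℝ) (hS : Measurable S)
    (hlaw : Measure.map S μ
      = (volume.restrict (Set.Ico (1 : ℝ) 10)).withDensity
          (fun u => ENNReal.ofReal (Real.logb 10 (Real.exp 1) / u))) :
    ∀ d ∈ Finset.Icc (1 : ℕ) 9,
      ∫ ω, Set.indicator (Set.Ico (d : ℝ) ((d : ℝ) + 1)) id (S ω) ∂μ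
        = Real.logb 10 (Real.exp 1) := by
  intro d hd
  obtain ⟨hd1, hd9⟩ : (1 : ℝ) ≤ d ∧ (d : ℝ) ≤ 9 := by
    rw [Finset.mem_Icc] at hd; exact ⟨by exact_mod_cast hd.1, by exact_mod_cast hd.2⟩
  have hsub : Set.Ico (d : ℝ) (d + 1) ⊆ Set.Ico 1 10 := Set.Ico_subset_Ico hd1 (by linarith)
  have hpos : Set.Ico (d : ℝ) (d + 1) ⊆ Set.Ioi 0 :=
    hsub.trans fun _ hx => lt_of_lt_of_le one_pos hx.1
  have hC : 0 ≤ Real.logb 10 (Real.exp 1) :=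
    Real.logb_nonneg (by norm_num) (Real.one_le_exp zero_le_one)
  rw [← integral_map hS.aemeasurable
      (measurable_id.indicator measurableSet_Ico).aestronglyMeasurable, hlaw,
    integral_indicator_id_withDensity_const_div hC measurableSet_Ico hpos,
    measureReal_restrict_apply measurableSet_Ico, Set.inter_eq_left.mpr hsub,
    Real.volume_real_Ico_of_le (by linarith)]
  ring

/-- Sum-invariance property of Benford's law: for each first digit `d ∈ {1,…,9}`,
`E[S(X)·𝟙{d ≤ S(X) < d+1}] = C`, where `C = log₁₀ e`. -/
theorem benford_sum_invariance {Ω : Type*} [MeasurableSpace Ω] (μ : Measure Ω)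
    [IsProbabilityMeasure μ] (S : Ω → ℝ) (hS : Measurable S)
    (hlaw : Measure.map S μ
      = (volume.restrict (Set.Ico (1 : ℝ) 10)).withDensity
          (fun u => ENNReal.ofReal (Real.logb 10 (Real.exp 1) / u))) :
    ∀ d ∈ Finset.Icc (1 : ℕ) 9,
      ∫ ω, Set.indicator (Set.Ico (d : ℝ) ((d : ℝ) + 1)) id (S ω) ∂μ
        = Real.logb 10 (Real.exp 1) :=
  benford_sum_invariance_general μ S hS hlaw
end

section
/- Let V = (V₁,V₂) have Laplace transform L(t₁,t₂) = (1+2t₂)^{−1/2} ∏_{j=1}^{8}(1+2t₁+2t₂+4(1−ρ_j²)t₁t₂)^{−1/2}. Then E[V₁V₂] = 72 + 2Σ_{j=1}^{8} ρ_j², and consequently cor[V₁,V₂] = (√2/12)·Σ_{j=1}^{8} ρ_j². -/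
/-!
For nonnegative `X`, the quotients `(1 - e^{-tX}) / t` lie in `[0, X]` and tend to `X` as `t ↓ 0`,
so Fatou's lemma and dominated convergence turn limits of difference quotients of the Laplace
transform `Ψ` into moments: `E[X] = -∂₁Ψ(0,0)`, and, by polarization along the rays `(t,0)`,
`(0,t)`, `(t,t)`, `E[XY] = ∂₁∂₂Ψ(0,0)`. For the given `Ψ`, the restriction to the ray
`(xt, yt)` is a product of factors `(1 + a t + b t²)^{-1/2}`, whose first two derivatives at
`0` are read off from its logarithm.
-/

open MeasureTheory Filter Topology

def HasSecondDerivAt (f : ℝ → ℝ) (f₁ f₂ x : ℝ) : Prop :=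
  ∃ f' : ℝ → ℝ, (∀ᶠ y in 𝓝 x, HasDerivAt f (f' y) y) ∧ f' x = f₁ ∧ HasDerivAt f' f₂ x

theorem hasSecondDerivAt_const (c x : ℝ) : HasSecondDerivAt (fun _ => c) 0 0 x :=
  ⟨fun _ => 0, Eventually.of_forall fun y => hasDerivAt_const y c, rfl, hasDerivAt_const x 0⟩

namespace HasSecondDerivAt

variable {f g : ℝ → ℝ} {f₁ f₂ g₁ g₂ x : ℝ}

theorem hasDerivAt (h : HasSecondDerivAt f f₁ f₂ x) : HasDerivAt f f₁ x := by
  obtain ⟨f', hf', rfl, -⟩ := h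
  exact hf'.self_of_nhds

theorem congr_of_eventuallyEq (h : HasSecondDerivAt f f₁ f₂ x) (hg : g =ᶠ[𝓝 x] f) :
    HasSecondDerivAt g f₁ f₂ x := by
  obtain ⟨f', hf', hf₁, hf₂⟩ := h
  refine ⟨f', ?_, hf₁, hf₂⟩
  filter_upwards [hf', hg.eventuallyEq_nhds] with y hy hgy
  exact hy.congr_of_eventuallyEq hgy

theorem add (hf : HasSecondDerivAt f f₁ f₂ x) (hg : HasSecondDerivAt g g₁ g₂ x) :
    HasSecondDerivAt (fun y => f y + g y) (f₁ + g₁) (f₂ + g₂) x := by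
  obtain ⟨f', hf', rfl, hf₂⟩ := hf
  obtain ⟨g', hg', rfl, hg₂⟩ := hg
  refine ⟨fun y => f' y + g' y, ?_, rfl, hf₂.add hg₂⟩
  filter_upwards [hf', hg'] with y hfy hgy
  exact hfy.add hgy

theorem sub (hf : HasSecondDerivAt f f₁ f₂ x) (hg : HasSecondDerivAt g g₁ g₂ x) :
    HasSecondDerivAt (fun y => f y - g y) (f₁ - g₁) (f₂ - g₂) x := by
  obtain ⟨f', hf', rfl, hf₂⟩ := hf
  obtain ⟨g', hg', rfl, hg₂⟩ := hg
  refine ⟨fun y => f' y - g' y, ?_, rfl, hf₂.sub hg₂⟩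
  filter_upwards [hf', hg'] with y hfy hgy
  exact hfy.sub hgy

theorem const_mul (c : ℝ) (h : HasSecondDerivAt f f₁ f₂ x) :
    HasSecondDerivAt (fun y => c * f y) (c * f₁) (c * f₂) x := by
  obtain ⟨f', hf', rfl, hf₂⟩ := h
  exact ⟨fun y => c * f' y, hf'.mono fun y hy => hy.const_mul c, rfl, hf₂.const_mul c⟩

theorem sum {ι : Type*} {s : Finset ι} {f : ι → ℝ → ℝ} {f₁ f₂ : ι → ℝ}
    (h : ∀ i ∈ s, HasSecondDerivAt (f i) (f₁ i) (f₂ i) x) :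
    HasSecondDerivAt (fun y => ∑ i ∈ s, f i y) (∑ i ∈ s, f₁ i) (∑ i ∈ s, f₂ i) x := by
  choose! f' hf' hf₁ hf₂ using h
  refine ⟨fun y => ∑ i ∈ s, f' i y, ?_, Finset.sum_congr rfl hf₁, HasDerivAt.fun_sum hf₂⟩
  filter_upwards [(eventually_all_finset s).2 hf'] with y hy
  exact HasDerivAt.fun_sum hy

theorem exp (h : HasSecondDerivAt f f₁ f₂ x) :
    HasSecondDerivAt (fun y => Real.exp (f y)) (Real.exp (f x) * f₁)
      (Real.exp (f x) * (f₁ ^ 2 + f₂)) x := by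
  obtain ⟨f', hf', rfl, hf₂⟩ := h
  refine ⟨fun y => Real.exp (f y) * f' y, hf'.mono fun y hy => hy.exp, rfl, ?_⟩
  exact (hf'.self_of_nhds.exp.mul hf₂).congr_deriv (by ring)

theorem comp_const_mul (h : HasSecondDerivAt f f₁ f₂ 0) (c : ℝ) :
    HasSecondDerivAt (fun t => f (c * t)) (c * f₁) (c ^ 2 * f₂) 0 := by
  obtain ⟨f', hf', rfl, hf₂⟩ := h
  have hc : Tendsto (fun t : ℝ => c * t) (𝓝 0) (𝓝 0) := by
    simpa using (continuous_const_mul c).tendsto (0 : ℝ)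
  have hmul : ∀ t : ℝ, HasDerivAt (fun t => c * t) c t := fun t => by
    simpa using (hasDerivAt_id t).const_mul c
  refine ⟨fun t => c * f' (c * t), ?_, by simp, ?_⟩
  · filter_upwards [hc.eventually hf'] with t ht
    exact (ht.comp t (hmul t)).congr_deriv (mul_comm _ _)
  · rw [← mul_zero c] at hf₂
    exact ((hf₂.comp 0 (hmul 0)).const_mul c).congr_deriv (by ring)

theorem tendsto_div_sq (h : HasSecondDerivAt f 0 f₂ 0) (h₀ : f 0 = 0) :
    Tendsto (fun t => f t / t ^ 2) (𝓝[≠] 0) (𝓝 (f₂ / 2)) := by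
  obtain ⟨f', hf', hf₁, hf₂⟩ := h
  refine HasDerivAt.lhopital_zero_nhdsNE (f' := f') (g' := fun t => 2 * t)
    (nhdsWithin_le_nhds hf') (Eventually.of_forall fun t => by simpa using hasDerivAt_pow 2 t)
    (eventually_nhdsWithin_of_forall fun t ht => by simpa using ht) ?_ ?_ ?_
  · simpa [h₀] using hf'.self_of_nhds.continuousAt.tendsto.mono_left nhdsWithin_le_nhds
  · simpa using ((continuous_pow 2).tendsto (0 : ℝ)).mono_left nhdsWithin_le_nhds
  · refine ((hasDerivAt_iff_tendsto_slope.mp hf₂).div_const 2).congr fun t => ?_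
    rw [slope_def_field, hf₁]
    ring

end HasSecondDerivAt

theorem HasDerivAt.tendsto_sub_div {f : ℝ → ℝ} {f₁ : ℝ} (h : HasDerivAt f f₁ 0) :
    Tendsto (fun t => (f 0 - f t) / t) (𝓝[≠] 0) (𝓝 (-f₁)) := by
  refine (hasDerivAt_iff_tendsto_slope.mp h).neg.congr fun t => ?_
  rw [slope_def_field, sub_zero, ← neg_div, neg_sub]

/-- Along the rays `f(t) = Φ(t,0)`, `g(t) = Φ(0,t)`, `h(t) = Φ(t,t)` of a function `Φ` of two
variables, this quotient tends to the mixed partial derivative `∂₁∂₂Φ(0,0)`. -/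
theorem tendsto_mixed_difference_div_sq {f g h : ℝ → ℝ} {c f₁ f₂ g₁ g₂ h₁ h₂ : ℝ}
    (hf : HasSecondDerivAt f f₁ f₂ 0) (hg : HasSecondDerivAt g g₁ g₂ 0)
    (hh : HasSecondDerivAt h h₁ h₂ 0) (hf₀ : f 0 = c) (hg₀ : g 0 = c) (hh₀ : h 0 = c)
    (h₁_eq : h₁ = f₁ + g₁) :
    Tendsto (fun t => (c - f t - g t + h t) / t ^ 2) (𝓝[≠] 0) (𝓝 ((h₂ - f₂ - g₂) / 2)) := by
  have hG := (((hasSecondDerivAt_const c 0).sub hf).sub hg).add hh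
  rw [show 0 - f₁ - g₁ + h₁ = 0 by rw [h₁_eq]; ring] at hG
  convert hG.tendsto_div_sq (by simp [hf₀, hg₀, hh₀]) using 3
  ring

theorem hasSecondDerivAt_log_quadratic (a b : ℝ) :
    HasSecondDerivAt (fun t => Real.log (1 + a * t + b * t ^ 2)) a (2 * b - a ^ 2) 0 := by
  have hq : ∀ t : ℝ, HasDerivAt (fun t => 1 + a * t + b * t ^ 2) (a + 2 * b * t) t := fun t =>
    (((hasDerivAt_id t).const_mul a).const_add 1).add ((hasDerivAt_pow 2 t).const_mul b)
      |>.congr_deriv (by simp; ring)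
  have hne : ∀ᶠ t in 𝓝 (0 : ℝ), 1 + a * t + b * t ^ 2 ≠ 0 :=
    (by fun_prop : Continuous fun t : ℝ => 1 + a * t + b * t ^ 2).continuousAt.eventually_ne
      (by simp)
  refine ⟨fun t => (a + 2 * b * t) / (1 + a * t + b * t ^ 2),
    hne.mono fun t ht => (hq t).log ht, by simp, ?_⟩
  exact ((((hasDerivAt_id 0).const_mul (2 * b)).const_add a).div (hq 0) (by simp)).congr_deriv
    (by simp; ring)

theorem hasSecondDerivAt_prod_quadratic_rpow_neg_half {ι : Type*} (s : Finset ι) (a b : ι → ℝ) :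
    HasSecondDerivAt (fun t => ∏ i ∈ s, (1 + a i * t + b i * t ^ 2) ^ (-(1 : ℝ) / 2))
      (-(∑ i ∈ s, a i) / 2) ((∑ i ∈ s, a i) ^ 2 / 4 - (∑ i ∈ s, (2 * b i - a i ^ 2)) / 2) 0 := by
  have hexp := ((HasSecondDerivAt.sum (s := s) fun i _ =>
    hasSecondDerivAt_log_quadratic (a i) (b i)).const_mul (-(1 : ℝ) / 2)).exp
  simp only [mul_zero, add_zero, zero_pow two_ne_zero, Real.log_one, Finset.sum_const_zero,
    Real.exp_zero, one_mul] at hexp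
  have hpos : ∀ᶠ t in 𝓝 (0 : ℝ), ∀ i ∈ s, 0 < 1 + a i * t + b i * t ^ 2 :=
    (eventually_all_finset s).2 fun i _ => continuousAt_const.eventually_lt
      (by fun_prop : Continuous fun t : ℝ => 1 + a i * t + b i * t ^ 2).continuousAt (by simp)
  convert hexp.congr_of_eventuallyEq (hpos.mono fun t ht => ?_) using 1
  · ring
  · ring
  · simp only [Finset.mul_sum, Real.exp_sum]
    exact Finset.prod_congr rfl fun i hi => by rw [Real.rpow_def_of_pos (ht i hi), mul_comm]

noncomputable def laplace {ι : Type*} [Fintype ι] (ρ : ι → ℝ) (t₁ t₂ : ℝ) : ℝ :=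
  (1 + 2 * t₂) ^ (-(1 : ℝ) / 2)
    * ∏ j, (1 + 2 * t₁ + 2 * t₂ + 4 * (1 - ρ j ^ 2) * t₁ * t₂) ^ (-(1 : ℝ) / 2)

theorem hasSecondDerivAt_laplace_comp_mul {ι : Type*} [Fintype ι] (ρ : ι → ℝ) (x y : ℝ) :
    HasSecondDerivAt (fun t => laplace ρ (x * t) (y * t))
      (-(Fintype.card ι * x + (Fintype.card ι + 1) * y))
      ((Fintype.card ι * x + (Fintype.card ι + 1) * y) ^ 2 + 2 * y ^ 2
        + 2 * Fintype.card ι * (x + y) ^ 2 - 4 * x * y * ∑ j, (1 - ρ j ^ 2)) 0 := by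
  -- the factor `(1 + 2 t₂) ^ (-1/2)` is the one indexed by `none`
  convert hasSecondDerivAt_prod_quadratic_rpow_neg_half Finset.univ
    (fun i : Option ι => i.elim (2 * y) fun _ => 2 * (x + y))
    (fun i => i.elim 0 fun j => 4 * (1 - ρ j ^ 2) * x * y) using 1
  · funext t
    rw [laplace, Fintype.prod_option]
    congr 1
    · simp only [Option.elim_none]
      ring_nf
    · exact Finset.prod_congr rfl fun j _ => by simp only [Option.elim_some]; ring_nf
  · simp [Fintype.sum_option]
    ring
  · simp [Fintype.sum_option, Finset.sum_sub_distrib, ← Finset.sum_mul, ← Finset.mul_sum]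
    ring

theorem one_sub_exp_neg_mul_div_nonneg {t x : ℝ} (ht : 0 < t) (hx : 0 ≤ x) :
    0 ≤ (1 - Real.exp (-t * x)) / t :=
  div_nonneg (sub_nonneg.2 (Real.exp_le_one_iff.2 (by nlinarith))) ht.le

theorem one_sub_exp_neg_mul_div_le {t : ℝ} (ht : 0 < t) (x : ℝ) :
    (1 - Real.exp (-t * x)) / t ≤ x := by
  rw [div_le_iff₀ ht]
  linarith [Real.add_one_le_exp (-t * x)]

theorem tendsto_one_sub_exp_neg_mul_div (x : ℝ) :
    Tendsto (fun t => (1 - Real.exp (-t * x)) / t) (𝓝[>] 0) (𝓝 x) := by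
  have h : HasDerivAt (fun t => Real.exp (-t * x)) (-x) 0 := by
    simpa using ((hasDerivAt_neg' (0 : ℝ)).mul_const x).exp
  simpa using h.tendsto_sub_div.mono_left (nhdsGT_le_nhdsNE 0)

theorem integrable_exp_of_nonpos {Ω : Type*} [MeasurableSpace Ω] {μ : Measure Ω}
    [IsFiniteMeasure μ] {g : Ω → ℝ} (hg : Measurable g) (hg₀ : ∀ ω, g ω ≤ 0) :
    Integrable (fun ω => Real.exp (g ω)) μ :=
  (integrable_const 1).mono' (Real.measurable_exp.comp hg).aestronglyMeasurable
    (ae_of_all _ fun ω => by simpa using hg₀ ω)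

theorem integrable_exp_neg_mul {Ω : Type*} [MeasurableSpace Ω] {μ : Measure Ω}
    [IsFiniteMeasure μ] {Z : Ω → ℝ} (hZm : Measurable Z) (hZ : ∀ ω, 0 ≤ Z ω) {t : ℝ}
    (ht : 0 ≤ t) : Integrable (fun ω => Real.exp (-t * Z ω)) μ :=
  integrable_exp_of_nonpos (hZm.const_mul _) fun ω => by nlinarith [hZ ω]

section Convergence

variable {Ω : Type*} [MeasurableSpace Ω] {μ : Measure Ω} {H : Ω → ℝ} {c : ℝ}

/-- Fatou's lemma makes `H` integrable; dominated convergence then identifies its integral. -/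
theorem integral_eq_of_tendsto_integral_of_le {F : ℕ → Ω → ℝ} (hF : ∀ n, Integrable (F n) μ)
    (hF_nonneg : ∀ n, 0 ≤ᵐ[μ] F n) (hF_le : ∀ n, F n ≤ᵐ[μ] H) (hH : AEStronglyMeasurable H μ)
    (hF_lim : ∀ᵐ ω ∂μ, Tendsto (fun n => F n ω) atTop (𝓝 (H ω)))
    (hc : Tendsto (fun n => ∫ ω, F n ω ∂μ) atTop (𝓝 c)) :
    ∫ ω, H ω ∂μ = c := by
  have hofReal :
      Tendsto (fun n => ∫⁻ ω, ENNReal.ofReal (F n ω) ∂μ) atTop (𝓝 (ENNReal.ofReal c)) :=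
    (ENNReal.tendsto_ofReal hc).congr fun n =>
      ofReal_integral_eq_lintegral_ofReal (hF n) (hF_nonneg n)
  have hFatou : ∫⁻ ω, ENNReal.ofReal (H ω) ∂μ ≤ ENNReal.ofReal c := by
    calc ∫⁻ ω, ENNReal.ofReal (H ω) ∂μ
        = ∫⁻ ω, liminf (fun n => ENNReal.ofReal (F n ω)) atTop ∂μ :=
          lintegral_congr_ae <| hF_lim.mono fun ω hω => (ENNReal.tendsto_ofReal hω).liminf_eq.symm
      _ ≤ liminf (fun n => ∫⁻ ω, ENNReal.ofReal (F n ω) ∂μ) atTop :=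
          lintegral_liminf_le' fun n => (hF n).aemeasurable.ennreal_ofReal
      _ = ENNReal.ofReal c := hofReal.liminf_eq
  have hH_int : Integrable H μ :=
    ⟨hH, (hasFiniteIntegral_iff_ofReal ((hF_nonneg 0).trans (hF_le 0))).2
      (hFatou.trans_lt ENNReal.ofReal_lt_top)⟩
  refine tendsto_nhds_unique (tendsto_integral_of_dominated_convergence H
    (fun n => (hF n).aestronglyMeasurable) hH_int (fun n => ?_) hF_lim) hc
  filter_upwards [hF_nonneg n, hF_le n] with ω h₀ h₁
  rwa [Real.norm_of_nonneg h₀]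

theorem integral_eq_of_tendsto_integral_of_le_nhdsGT {F : ℝ → Ω → ℝ}
    (hF : ∀ t > 0, Integrable (F t) μ) (hF_nonneg : ∀ t > 0, 0 ≤ᵐ[μ] F t)
    (hF_le : ∀ t > 0, F t ≤ᵐ[μ] H) (hH : AEStronglyMeasurable H μ)
    (hF_lim : ∀ᵐ ω ∂μ, Tendsto (fun t => F t ω) (𝓝[>] 0) (𝓝 (H ω)))
    (hc : Tendsto (fun t => ∫ ω, F t ω ∂μ) (𝓝[>] 0) (𝓝 c)) :
    ∫ ω, H ω ∂μ = c := by
  have hu : Tendsto (fun n : ℕ => 1 / ((n : ℝ) + 1)) atTop (𝓝[>] 0) :=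
    tendsto_nhdsWithin_of_tendsto_nhds_of_eventually_within _
      tendsto_one_div_add_atTop_nhds_zero_nat (Eventually.of_forall fun n => by simp; positivity)
  have hu₀ : ∀ n : ℕ, 1 / ((n : ℝ) + 1) > 0 := fun n => by positivity
  exact integral_eq_of_tendsto_integral_of_le (fun n => hF _ (hu₀ n))
    (fun n => hF_nonneg _ (hu₀ n)) (fun n => hF_le _ (hu₀ n)) hH
    (hF_lim.mono fun ω hω => hω.comp hu) (hc.comp hu)

end Convergence

def IsLaplaceTransform {Ω : Type*} [MeasurableSpace Ω] (μ : Measure Ω) (X Y : Ω → ℝ)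
    (Ψ : ℝ → ℝ → ℝ) : Prop :=
  ∀ t₁ t₂ : ℝ, 0 ≤ t₁ → 0 ≤ t₂ → ∫ ω, Real.exp (-t₁ * X ω - t₂ * Y ω) ∂μ = Ψ t₁ t₂

namespace IsLaplaceTransform

variable {Ω : Type*} [MeasurableSpace Ω] {μ : Measure Ω} {X Y : Ω → ℝ} {Ψ : ℝ → ℝ → ℝ}

theorem swap (h : IsLaplaceTransform μ X Y Ψ) : IsLaplaceTransform μ Y X fun t₁ t₂ => Ψ t₂ t₁ :=
  fun t₁ t₂ h₁ h₂ => by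
    dsimp only
    rw [← h t₂ t₁ h₂ h₁]
    congr with ω
    ring_nf

theorem self (h : IsLaplaceTransform μ X Y Ψ) :
    IsLaplaceTransform μ X X fun t₁ t₂ => Ψ (t₁ + t₂) 0 :=
  fun t₁ t₂ h₁ h₂ => by
    dsimp only
    rw [← h (t₁ + t₂) 0 (add_nonneg h₁ h₂) le_rfl]
    congr with ω
    ring_nf

theorem integral_exp_fst (h : IsLaplaceTransform μ X Y Ψ) {t : ℝ} (ht : 0 ≤ t) :
    ∫ ω, Real.exp (-t * X ω) ∂μ = Ψ t 0 := by
  simpa using h t 0 ht le_rfl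

variable [IsProbabilityMeasure μ]

theorem apply_zero_zero (h : IsLaplaceTransform μ X Y Ψ) : Ψ 0 0 = 1 := by
  simpa using (h 0 0 le_rfl le_rfl).symm

theorem integral_fst_eq (h : IsLaplaceTransform μ X Y Ψ) (hXm : Measurable X)
    (hX : ∀ ω, 0 ≤ X ω) {m : ℝ} (hm : HasDerivAt (fun t => Ψ t 0) m 0) :
    ∫ ω, X ω ∂μ = -m := by
  have hint : ∀ t > 0, Integrable (fun ω => Real.exp (-t * X ω)) μ := fun t ht =>
    integrable_exp_neg_mul hXm hX ht.le
  refine integral_eq_of_tendsto_integral_of_le_nhdsGT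
    (F := fun t ω => (1 - Real.exp (-t * X ω)) / t)
    (fun t ht => ((integrable_const 1).sub (hint t ht)).div_const _)
    (fun t ht => ae_of_all _ fun ω => one_sub_exp_neg_mul_div_nonneg ht (hX ω))
    (fun t ht => ae_of_all _ fun ω => one_sub_exp_neg_mul_div_le ht (X ω))
    hXm.aestronglyMeasurable (ae_of_all _ fun ω => tendsto_one_sub_exp_neg_mul_div (X ω)) ?_
  refine (hm.tendsto_sub_div.mono_left (nhdsGT_le_nhdsNE 0)).congr'
    (eventually_nhdsWithin_of_forall fun t ht => ?_)
  dsimp only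
  rw [integral_div, integral_sub (integrable_const 1) (hint t ht), h.integral_exp_fst ht.le,
    h.apply_zero_zero, integral_const, probReal_univ, one_smul]

theorem integrable_and_integral_one_sub_exp_mul (h : IsLaplaceTransform μ X Y Ψ)
    (hXm : Measurable X) (hYm : Measurable Y) (hX : ∀ ω, 0 ≤ X ω) (hY : ∀ ω, 0 ≤ Y ω) {t : ℝ}
    (ht : 0 ≤ t) :
    Integrable (fun ω => (1 - Real.exp (-t * X ω)) * (1 - Real.exp (-t * Y ω))) μ ∧
      ∫ ω, (1 - Real.exp (-t * X ω)) * (1 - Real.exp (-t * Y ω)) ∂μ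
        = 1 - Ψ t 0 - Ψ 0 t + Ψ t t := by
  have hexpand : ∀ ω, (1 - Real.exp (-t * X ω)) * (1 - Real.exp (-t * Y ω))
      = 1 - Real.exp (-t * X ω) - Real.exp (-t * Y ω) + Real.exp (-t * X ω - t * Y ω) :=
    fun ω => by
      rw [sub_eq_add_neg (-t * X ω), Real.exp_add, ← neg_mul]
      ring
  have hint_X := integrable_exp_neg_mul (μ := μ) hXm hX ht
  have hint_Y := integrable_exp_neg_mul (μ := μ) hYm hY ht
  have hint₁ : Integrable (fun ω => 1 - Real.exp (-t * X ω)) μ :=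
    (integrable_const 1).sub hint_X
  have hint₂ : Integrable (fun ω => 1 - Real.exp (-t * X ω) - Real.exp (-t * Y ω)) μ :=
    hint₁.sub hint_Y
  have hint₃ : Integrable (fun ω => Real.exp (-t * X ω - t * Y ω)) μ :=
    integrable_exp_of_nonpos ((hXm.const_mul _).sub (hYm.const_mul _))
      fun ω => by nlinarith [hX ω, hY ω]
  simp_rw [hexpand]
  refine ⟨hint₂.add hint₃, ?_⟩
  rw [integral_add hint₂ hint₃, integral_sub hint₁ hint_Y,
    integral_sub (integrable_const 1) hint_X, h.integral_exp_fst ht, h.swap.integral_exp_fst ht,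
    h t t ht ht, integral_const, probReal_univ, one_smul]

theorem integral_mul_eq (h : IsLaplaceTransform μ X Y Ψ) (hXm : Measurable X)
    (hYm : Measurable Y) (hX : ∀ ω, 0 ≤ X ω) (hY : ∀ ω, 0 ≤ Y ω) {f₁ f₂ g₁ g₂ h₁ h₂ : ℝ}
    (hf : HasSecondDerivAt (fun t => Ψ t 0) f₁ f₂ 0)
    (hg : HasSecondDerivAt (fun t => Ψ 0 t) g₁ g₂ 0)
    (hh : HasSecondDerivAt (fun t => Ψ t t) h₁ h₂ 0) (h₁_eq : h₁ = f₁ + g₁) :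
    ∫ ω, X ω * Y ω ∂μ = (h₂ - f₂ - g₂) / 2 := by
  have hprod := fun t (ht : 0 < t) =>
    h.integrable_and_integral_one_sub_exp_mul hXm hYm hX hY ht.le
  refine integral_eq_of_tendsto_integral_of_le_nhdsGT
    (F := fun t ω => (1 - Real.exp (-t * X ω)) / t * ((1 - Real.exp (-t * Y ω)) / t))
    (fun t ht => by simpa only [div_mul_div_comm] using (hprod t ht).1.div_const (t * t))
    (fun t ht => ae_of_all _ fun ω => mul_nonneg (one_sub_exp_neg_mul_div_nonneg ht (hX ω))
      (one_sub_exp_neg_mul_div_nonneg ht (hY ω)))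
    (fun t ht => ae_of_all _ fun ω => mul_le_mul (one_sub_exp_neg_mul_div_le ht (X ω))
      (one_sub_exp_neg_mul_div_le ht (Y ω)) (one_sub_exp_neg_mul_div_nonneg ht (hY ω)) (hX ω))
    (hXm.mul hYm).aestronglyMeasurable
    (ae_of_all _ fun ω => (tendsto_one_sub_exp_neg_mul_div (X ω)).mul
      (tendsto_one_sub_exp_neg_mul_div (Y ω))) ?_
  refine ((tendsto_mixed_difference_div_sq hf hg hh h.apply_zero_zero h.apply_zero_zero
    h.apply_zero_zero h₁_eq).mono_left (nhdsGT_le_nhdsNE 0)).congr'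
    (eventually_nhdsWithin_of_forall fun t ht => ?_)
  simp only [div_mul_div_comm, integral_div, (hprod t ht).2, sq]

theorem integral_sq_fst_eq (h : IsLaplaceTransform μ X Y Ψ) (hXm : Measurable X)
    (hX : ∀ ω, 0 ≤ X ω) {f₁ f₂ : ℝ} (hf : HasSecondDerivAt (fun t => Ψ t 0) f₁ f₂ 0) :
    ∫ ω, X ω ^ 2 ∂μ = f₂ := by
  have hdiag : HasSecondDerivAt (fun t => Ψ (t + t) 0) (2 * f₁) (2 ^ 2 * f₂) 0 := by
    simpa only [two_mul] using hf.comp_const_mul 2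
  simp_rw [sq]
  rw [h.self.integral_mul_eq hXm hXm hX hX (by simpa using hf) (by simpa using hf) hdiag
    (by ring)]
  ring

end IsLaplaceTransform

theorem V_mixed_moment_and_correlation_general {Ω : Type*} [MeasurableSpace Ω] (μ : Measure Ω)
    [IsProbabilityMeasure μ] (V₁ V₂ : Ω → ℝ) (hV₁m : Measurable V₁) (hV₂m : Measurable V₂)
    (hV₁ : ∀ ω, 0 ≤ V₁ ω) (hV₂ : ∀ ω, 0 ≤ V₂ ω)
    (ρ : Fin 8 → ℝ)
    (hL : ∀ t₁ t₂ : ℝ, 0 ≤ t₁ → 0 ≤ t₂ →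
      ∫ ω, Real.exp (-t₁ * V₁ ω - t₂ * V₂ ω) ∂μ
        = (1 + 2 * t₂) ^ (-(1 : ℝ) / 2)
          * ∏ j, (1 + 2 * t₁ + 2 * t₂ + 4 * (1 - ρ j ^ 2) * t₁ * t₂) ^ (-(1 : ℝ) / 2)) :
    (∫ ω, V₁ ω * V₂ ω ∂μ = 72 + 2 * ∑ j, ρ j ^ 2)
    ∧ ((∫ ω, V₁ ω * V₂ ω ∂μ) - (∫ ω, V₁ ω ∂μ) * ∫ ω, V₂ ω ∂μ)
        / Real.sqrt (((∫ ω, V₁ ω ^ 2 ∂μ) - (∫ ω, V₁ ω ∂μ) ^ 2)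
            * ((∫ ω, V₂ ω ^ 2 ∂μ) - (∫ ω, V₂ ω ∂μ) ^ 2))
      = Real.sqrt 2 / 12 * ∑ j, ρ j ^ 2 := by
  have hΨ : IsLaplaceTransform μ V₁ V₂ (laplace ρ) := hL
  have h₁₀ : HasSecondDerivAt (fun t => laplace ρ t 0) (-8) 80 0 := by
    convert hasSecondDerivAt_laplace_comp_mul ρ 1 0 using 1 <;> norm_num
  have h₀₁ : HasSecondDerivAt (fun t => laplace ρ 0 t) (-9) 99 0 := by
    convert hasSecondDerivAt_laplace_comp_mul ρ 0 1 using 1 <;> norm_num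
  have h₁₁ : HasSecondDerivAt (fun t => laplace ρ t t) (-17) (323 + 4 * ∑ j, ρ j ^ 2) 0 := by
    convert hasSecondDerivAt_laplace_comp_mul ρ 1 1 using 1 <;> norm_num [Finset.sum_sub_distrib]
    ring
  have m₁ : ∫ ω, V₁ ω ∂μ = 8 := by simpa using hΨ.integral_fst_eq hV₁m hV₁ h₁₀.hasDerivAt
  have m₂ : ∫ ω, V₂ ω ∂μ = 9 := by simpa using hΨ.swap.integral_fst_eq hV₂m hV₂ h₀₁.hasDerivAt
  have m₁₂ : ∫ ω, V₁ ω * V₂ ω ∂μ = 72 + 2 * ∑ j, ρ j ^ 2 := by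
    rw [hΨ.integral_mul_eq hV₁m hV₂m hV₁ hV₂ h₁₀ h₀₁ h₁₁ (by norm_num)]
    ring
  refine ⟨m₁₂, ?_⟩
  rw [m₁₂, m₁, m₂, hΨ.integral_sq_fst_eq hV₁m hV₁ h₁₀, hΨ.swap.integral_sq_fst_eq hV₂m hV₂ h₀₁,
    show ((80 : ℝ) - 8 ^ 2) * (99 - 9 ^ 2) = 12 ^ 2 * 2 by norm_num,
    Real.sqrt_mul (by norm_num), Real.sqrt_sq (by norm_num)]
  field_simp
  linear_combination (-∑ j, ρ j ^ 2) * Real.sq_sqrt (show (0 : ℝ) ≤ 2 by norm_num)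

/-- If `(V₁,V₂)` (nonnegative) has Laplace transform
`L(t₁,t₂) = (1+2t₂)^{−1/2} ∏_{j=1}^{8}(1+2t₁+2t₂+4(1−ρ_j²)t₁t₂)^{−1/2}`, then
`E[V₁V₂] = 72 + 2∑_{j=1}^8 ρ_j²` and consequently
`cor[V₁,V₂] = (√2/12)·∑_{j=1}^8 ρ_j²`. -/
theorem V_mixed_moment_and_correlation {Ω : Type*} [MeasurableSpace Ω] (μ : Measure Ω)
    [IsProbabilityMeasure μ] (V₁ V₂ : Ω → ℝ) (hV₁m : Measurable V₁) (hV₂m : Measurable V₂)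
    (hV₁ : ∀ ω, 0 ≤ V₁ ω) (hV₂ : ∀ ω, 0 ≤ V₂ ω)
    (ρ : Fin 8 → ℝ) (hρ : ∀ j, ρ j ∈ Set.Icc (0 : ℝ) 1)
    (hL : ∀ t₁ t₂ : ℝ, 0 ≤ t₁ → 0 ≤ t₂ →
      ∫ ω, Real.exp (-t₁ * V₁ ω - t₂ * V₂ ω) ∂μ
        = (1 + 2 * t₂) ^ (-(1 : ℝ) / 2)
          * ∏ j, (1 + 2 * t₁ + 2 * t₂ + 4 * (1 - ρ j ^ 2) * t₁ * t₂) ^ (-(1 : ℝ) / 2)) :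
    (∫ ω, V₁ ω * V₂ ω ∂μ = 72 + 2 * ∑ j, ρ j ^ 2)
    ∧ ((∫ ω, V₁ ω * V₂ ω ∂μ) - (∫ ω, V₁ ω ∂μ) * ∫ ω, V₂ ω ∂μ)
        / Real.sqrt (((∫ ω, V₁ ω ^ 2 ∂μ) - (∫ ω, V₁ ω ∂μ) ^ 2)
            * ((∫ ω, V₂ ω ^ 2 ∂μ) - (∫ ω, V₂ ω ∂μ) ^ 2))
      = Real.sqrt 2 / 12 * ∑ j, ρ j ^ 2 :=
  V_mixed_moment_and_correlation_general μ V₁ V₂ hV₁m hV₂m hV₁ hV₂ ρ hL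
end

section
/- Let X be a Generalized Benford random variable with parameter α ≠ 0, i.e., P(S(X) ≤ u) = (u^α − 1)/(10^α − 1) for u ∈ [1,10). Then for u ∈ [0,1), the distribution function of the fractional part of the significand is F(u) = (1/(10^α − 1)) Σ_{d=1}^{9} ((d+u)^α − d^α). -/
open MeasureTheory ProbabilityTheory Set

/-! For `u < 1` the event `Int.fract S ≤ u` is the disjoint union, over the leading digits
`d = 1, …, 9`, of the events `S ∈ [d, d + u]`. On `(-∞, 10)` the law of `S` has CDF
`F x = (max x 1 ^ α - 1) / (10 ^ α - 1)`: below `1` it vanishes because `S ≥ 1`, and taking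
`max x 1` makes this one continuous formula. Continuity rules out atoms, so
`[d, d + u]` has mass `F (d + u) - F d`, which is the `d`-th summand. -/

theorem measureReal_Icc_eq_sub_of_eqOn_cdf {ν : Measure ℝ} [IsProbabilityMeasure ν]
    {F : ℝ → ℝ} {s : Set ℝ} (hs : IsOpen s) (hF : ContinuousOn F s) (hνF : EqOn (cdf ν) F s)
    {a b : ℝ} (ha : a ∈ s) (hb : b ∈ s) (hab : a ≤ b) :
    ν.real (Icc a b) = F b - F a := by
  have hcont : ContinuousAt (cdf ν) a :=
    (hF.continuousAt (hs.mem_nhds ha)).congr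
      (Filter.eventuallyEq_of_mem (hs.mem_nhds ha) hνF.symm)
  rw [measureReal_def, ← measure_cdf ν, StieltjesFunction.measure_Icc,
    hcont.continuousWithinAt.leftLim_eq,
    ENNReal.toReal_ofReal (sub_nonneg.2 (monotone_cdf ν hab)), hνF hb, hνF ha]

theorem Nat.floor_eq_of_mem_Icc {d : ℕ} {u x : ℝ} (hu : u < 1) (hx : x ∈ Icc (d : ℝ) (d + u)) :
    ⌊x⌋₊ = d :=
  (Nat.floor_eq_iff (by linarith [hx.1, d.cast_nonneg (α := ℝ)])).2 ⟨hx.1, by linarith [hx.2]⟩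

theorem pairwiseDisjoint_Icc_natCast_add {u : ℝ} (hu : u < 1) (t : Set ℕ) :
    t.PairwiseDisjoint fun d : ℕ ↦ Icc (d : ℝ) (d + u) := fun _ _ _ _ hde ↦
  Set.disjoint_left.2 fun _ hd he ↦ hde <|
    (Nat.floor_eq_of_mem_Icc hu hd).symm.trans (Nat.floor_eq_of_mem_Icc hu he)

theorem setOf_fract_le_inter_Ico_natCast {u : ℝ} (hu : u < 1) (m n : ℕ) :
    {x : ℝ | Int.fract x ≤ u} ∩ Ico (m : ℝ) n = ⋃ d ∈ Finset.Ico m n, Icc (d : ℝ) (d + u) := by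
  ext x
  simp only [mem_inter_iff, mem_ofPred_eq, mem_Ico, mem_iUnion, Finset.mem_Ico, mem_Icc,
    exists_prop]
  constructor
  · rintro ⟨hfract, hmx, hxn⟩
    have hx : 0 ≤ x := (m.cast_nonneg).trans hmx
    have hfloor : (⌊x⌋₊ : ℝ) = ⌊x⌋ := by exact_mod_cast Int.natCast_floor_eq_floor hx
    refine ⟨⌊x⌋₊, ⟨Nat.le_floor hmx, (Nat.floor_lt hx).2 hxn⟩, Nat.floor_le hx, ?_⟩
    rw [hfloor]
    linarith [Int.floor_add_fract x]
  · rintro ⟨d, ⟨hmd, hdn⟩, hdx, hxd⟩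
    have hfloor : ⌊x⌋ = d := by
      rw [Int.floor_eq_iff]
      push_cast
      exact ⟨hdx, by linarith⟩
    refine ⟨?_, (Nat.cast_le.2 hmd).trans hdx, ?_⟩
    · rw [← Int.self_sub_floor, hfloor]
      push_cast
      linarith
    · have : (d : ℝ) + 1 ≤ n := by exact_mod_cast hdn
      linarith

theorem cdf_map_eqOn_of_generalizedBenford {Ω : Type*} [MeasurableSpace Ω] {μ : Measure Ω}
    [IsProbabilityMeasure μ] {S : Ω → ℝ} (hS : Measurable S) {α : ℝ}
    (hrange : ∀ ω, S ω ∈ Ico (1 : ℝ) 10)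
    (hGB : ∀ u ∈ Ico (1 : ℝ) 10, μ.real {ω | S ω ≤ u} = (u ^ α - 1) / ((10 : ℝ) ^ α - 1)) :
    EqOn (cdf (μ.map S)) (fun x ↦ (max x 1 ^ α - 1) / ((10 : ℝ) ^ α - 1)) (Iio 10) := by
  intro x hx
  have := Measure.isProbabilityMeasure_map (μ := μ) hS.aemeasurable
  rw [cdf_eq_real, map_measureReal_apply hS measurableSet_Iic]
  beta_reduce
  rcases lt_or_ge x 1 with hx1 | hx1
  · have hempty : S ⁻¹' Iic x = ∅ :=
      eq_empty_of_forall_notMem fun ω hω ↦ (hx1.trans_le (hrange ω).1).not_ge hω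
    simp [hempty, max_eq_right hx1.le]
  · exact (hGB x ⟨hx1, hx⟩).trans (by rw [max_eq_left hx1])

theorem continuous_max_one_rpow_sub_one_div (α c : ℝ) :
    Continuous fun x : ℝ ↦ (max x 1 ^ α - 1) / c :=
  ((continuous_id.max continuous_const).rpow_const fun x ↦
    Or.inl (zero_lt_one.trans_le (le_max_right x 1)).ne').sub continuous_const |>.div_const c

theorem generalized_benford_fract_cdf_general {Ω : Type*} [MeasurableSpace Ω] (μ : Measure Ω)
    [IsProbabilityMeasure μ] (S : Ω → ℝ) (hS : Measurable S) (α : ℝ)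
    (hrange : ∀ ω, S ω ∈ Set.Ico (1 : ℝ) 10)
    (hGB : ∀ u ∈ Set.Ico (1 : ℝ) 10,
      (μ {ω | S ω ≤ u}).toReal = (u ^ α - 1) / ((10 : ℝ) ^ α - 1)) :
    ∀ u ∈ Set.Ico (0 : ℝ) 1,
      (μ {ω | Int.fract (S ω) ≤ u}).toReal
        = (1 / ((10 : ℝ) ^ α - 1))
          * ∑ d ∈ Finset.Icc (1 : ℕ) 9, (((d : ℝ) + u) ^ α - (d : ℝ) ^ α) := by
  rintro u ⟨hu0, hu1⟩
  have := Measure.isProbabilityMeasure_map (μ := μ) hS.aemeasurable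
  have hevent : {ω | Int.fract (S ω) ≤ u} =
      S ⁻¹' ⋃ d ∈ Finset.Icc (1 : ℕ) 9, Icc (d : ℝ) (d + u) := by
    rw [show Finset.Icc (1 : ℕ) 9 = Finset.Ico 1 10 from rfl,
      ← setOf_fract_le_inter_Ico_natCast hu1]
    ext ω
    simpa using fun _ ↦ hrange ω
  have hcdf := cdf_map_eqOn_of_generalizedBenford hS hrange hGB
  rw [← measureReal_def, hevent,
    ← map_measureReal_apply hS (Finset.measurableSet_biUnion _ fun _ _ ↦ measurableSet_Icc),
    measureReal_biUnion_finset (pairwiseDisjoint_Icc_natCast_add hu1 _)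
      fun _ _ ↦ measurableSet_Icc, Finset.mul_sum]
  refine Finset.sum_congr rfl fun d hd ↦ ?_
  have hd : (1 : ℝ) ≤ d ∧ (d : ℝ) ≤ 9 := by
    rw [Finset.mem_Icc] at hd
    exact ⟨by exact_mod_cast hd.1, by exact_mod_cast hd.2⟩
  rw [measureReal_Icc_eq_sub_of_eqOn_cdf isOpen_Iio
      (continuous_max_one_rpow_sub_one_div _ _).continuousOn hcdf (mem_Iio.2 (by linarith))
      (mem_Iio.2 (by linarith)) (by linarith),
    max_eq_left (by linarith), max_eq_left hd.1]
  ring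

/-- If `X` is a Generalized Benford random variable with parameter `α ≠ 0`, i.e.
`P(S(X) ≤ u) = (u^α − 1)/(10^α − 1)` for `u ∈ [1,10)`, then for `u ∈ [0,1)` the CDF of
the fractional part of the significand is `(1/(10^α − 1)) ∑_{d=1}^9 ((d+u)^α − d^α)`. -/
theorem generalized_benford_fract_cdf {Ω : Type*} [MeasurableSpace Ω] (μ : Measure Ω)
    [IsProbabilityMeasure μ] (S : Ω → ℝ) (hS : Measurable S) (α : ℝ) (hα : α ≠ 0)
    (hrange : ∀ ω, S ω ∈ Set.Ico (1 : ℝ) 10)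
    (hGB : ∀ u ∈ Set.Ico (1 : ℝ) 10,
      (μ {ω | S ω ≤ u}).toReal = (u ^ α - 1) / ((10 : ℝ) ^ α - 1)) :
    ∀ u ∈ Set.Ico (0 : ℝ) 1,
      (μ {ω | Int.fract (S ω) ≤ u}).toReal
        = (1 / ((10 : ℝ) ^ α - 1))
          * ∑ d ∈ Finset.Icc (1 : ℕ) 9, (((d : ℝ) + u) ^ α - (d : ℝ) ^ α) :=
  generalized_benford_fract_cdf_general μ S hS α hrange hGB
end
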